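/- arXiv:2303.07960 — 10 statements merged into one kernel-verified Lean document; each statement's English description precedes it below -/
import Mathlib

section
/- Let I be a finite set of intervals, M(I) the set of intervals in I maximal with respect to containment, and R ⊆ M(I) an inclusion-wise minimal subset with ∪R = ∪I. If I \ R is nonempty, then the maximum size of a pairwise-intersecting subset of I \ R is strictly smaller than the maximum size of a pairwise-intersecting subset of I. -/
/-- The closed interval on the real line represented by a pair of endpoints. -/
def iv (p : ℝ × ℝ) : Set ℝ := Set.Icc p.1 p.2

/-- The union of the intervals in a finite set of intervals. -/
def unionIv (S : Finset (ℝ × ℝ)) : Set ℝ := ⋃ p ∈ S, iv p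

/-- A set of intervals is a clique if its members pairwise intersect. -/
def IsClique (T : Finset (ℝ × ℝ)) : Prop := ∀ p ∈ T, ∀ q ∈ T, (iv p ∩ iv q).Nonempty

/-- If `R` is an inclusion-wise minimal subset of the containment-maximal intervals `M(I)`
of a finite interval family `I` with `∪R = ∪I`, and `I \ R` is nonempty, then the maximum
clique size of `I \ R` is strictly smaller than the maximum clique size of `I`. -/
theorem stmt1 (I R : Finset (ℝ × ℝ))
    (hiv : ∀ p ∈ I, p.1 ≤ p.2)
    (hRI : R ⊆ I)
    (hmax : ∀ p ∈ R, ∀ q ∈ I, iv p ⊆ iv q → iv q ⊆ iv p)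
    (hcov : unionIv R = unionIv I)
    (hmin : ∀ R' ⊆ R, unionIv R' = unionIv I → R' = R)
    (hne : (I \ R).Nonempty) :
    ∀ T ⊆ I \ R, IsClique T → ∃ T' ⊆ I, IsClique T' ∧ T.card < T'.card := by
  intro T hT hclique
  rcases T.eq_empty_or_nonempty with rfl | hTne
  · -- empty clique: any singleton from I works
    obtain ⟨p, hp⟩ := hne
    have hpI : p ∈ I := (Finset.mem_sdiff.mp hp).1
    refine ⟨{p}, by simpa using hpI, ?_, by simp⟩
    intro a ha b hb
    simp only [Finset.mem_singleton] at ha hb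
    subst ha; subst hb
    exact ⟨b.1, by simp [iv, Set.mem_Icc, hiv b hpI]⟩
  · -- Helly: common point x of the clique
    obtain ⟨p0, hp0, hmax0⟩ := T.exists_max_image (fun p => p.1) hTne
    set x := p0.1 with hx
    have hxmem : ∀ q ∈ T, x ∈ iv q := by
      intro q hq
      obtain ⟨y, hy1, hy2⟩ := hclique p0 hp0 q hq
      simp only [iv, Set.mem_Icc] at hy1 hy2 ⊢
      exact ⟨hmax0 q hq, le_trans hy1.1 hy2.2⟩
    have hxI : x ∈ unionIv R := by
      rw [hcov]
      have hp0I : p0 ∈ I := (Finset.mem_sdiff.mp (hT hp0)).1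
      exact Set.mem_biUnion hp0I (hxmem p0 hp0)
    simp only [unionIv, Set.mem_iUnion] at hxI
    obtain ⟨r, hrR, hxr⟩ := hxI
    have hrT : r ∉ T := fun h => (Finset.mem_sdiff.mp (hT h)).2 hrR
    refine ⟨insert r T, ?_, ?_, ?_⟩
    · intro a ha
      rcases Finset.mem_insert.mp ha with rfl | ha
      · exact hRI hrR
      · exact (Finset.mem_sdiff.mp (hT ha)).1
    · intro a ha b hb
      have hax : x ∈ iv a := by
        rcases Finset.mem_insert.mp ha with rfl | ha
        · exact hxr
        · exact hxmem a ha
      have hbx : x ∈ iv b := by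
        rcases Finset.mem_insert.mp hb with rfl | hb
        · exact hxr
        · exact hxmem b hb
      exact ⟨x, hax, hbx⟩
    · rw [Finset.card_insert_of_notMem hrT]; omega
end

section
/- For every finite set I of intervals, the containment interval graph C[I] admits a proper coloring using at most 2·ω(C[I]) − 1 colors, where ω denotes the maximum clique size. -/
/-- Two intervals overlap: they intersect and neither contains the other. -/
def Overlaps (p q : ℝ × ℝ) : Prop :=
  (iv p ∩ iv q).Nonempty ∧ ¬ iv p ⊆ iv q ∧ ¬ iv q ⊆ iv p

/-- A proper coloring of the containment interval graph `C[I]`: if interval `p`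
properly contains interval `q` (arc `(p,q)`), then `f p < f q`; if `p` and `q`
overlap (edge `{p,q}`), then `f p ≠ f q`. -/
def ProperColoring (I : Finset (ℝ × ℝ)) (f : ℝ × ℝ → ℕ) : Prop :=
  ∀ p ∈ I, ∀ q ∈ I, (iv q ⊂ iv p → f p < f q) ∧ (Overlaps p q → f p ≠ f q)

/-- The clique number of `C[I]`: the maximum size of a set of pairwise
intersecting intervals of `I`. -/
noncomputable def CliqueNum (I : Finset (ℝ × ℝ)) : ℕ :=
  sSup {n | ∃ T ⊆ I, (∀ p ∈ T, ∀ q ∈ T, (iv p ∩ iv q).Nonempty) ∧ T.card = n}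

/-- The chromatic number of `C[I]`: the minimum `k` such that `C[I]` admits a
proper coloring with colors in `{1, …, k}`. -/
noncomputable def ChromNum (I : Finset (ℝ × ℝ)) : ℕ :=
  sInf {k | ∃ f : ℝ × ℝ → ℕ, ProperColoring I f ∧ ∀ p ∈ I, f p ∈ Finset.Icc 1 k}

attribute [local instance] Classical.propDecidable

lemma mem_iv_self {p : ℝ × ℝ} (h : p.1 ≤ p.2) : p.1 ∈ iv p :=
  Set.mem_Icc.mpr ⟨le_refl _, h⟩

lemma iv_subset_iff {p q : ℝ × ℝ} (hp : p.1 ≤ p.2) :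
    iv p ⊆ iv q ↔ q.1 ≤ p.1 ∧ p.2 ≤ q.2 := Set.Icc_subset_Icc_iff hp

lemma ssubset_len {p q : ℝ × ℝ} (hp : p.1 ≤ p.2) (hq : q.1 ≤ q.2)
    (h : iv p ⊂ iv q) : p.2 - p.1 < q.2 - q.1 := by
  obtain ⟨h1, h2⟩ := h
  rw [iv_subset_iff hp] at h1
  rw [iv_subset_iff hq] at h2
  push_neg at h2
  rcases lt_or_eq_of_le h1.1 with hc | hc
  · linarith [h1.2]
  · have := h2 (le_of_eq hc.symm)
    have h12 := h1.1
    have h22 := h1.2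
    linarith

/-- Every interval of `I` is contained in an interval of `I` that is maximal in `I`. -/
lemma exists_isMax (I : Finset (ℝ × ℝ)) (hiv : ∀ p ∈ I, p.1 ≤ p.2) {p : ℝ × ℝ}
    (hp : p ∈ I) : ∃ r ∈ I, iv p ⊆ iv r ∧ ∀ r' ∈ I, ¬ iv r ⊂ iv r' := by
  set F := I.filter (fun r => iv p ⊆ iv r) with hF
  have hne : F.Nonempty := ⟨p, by simp [hF, hp]⟩
  obtain ⟨r, hrF, hmax⟩ := F.exists_max_image (fun r => r.2 - r.1) hne
  simp only [hF, Finset.mem_filter] at hrF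
  refine ⟨r, hrF.1, hrF.2, ?_⟩
  intro r' hr' hss
  have hr'F : r' ∈ F := by
    simp only [hF, Finset.mem_filter]
    exact ⟨hr', hrF.2.trans hss.subset⟩
  have h1 := hmax r' hr'F
  have h2 := ssubset_len (hiv r hrF.1) (hiv r' hr') hss
  linarith

lemma clique_card_le (I : Finset (ℝ × ℝ)) {T : Finset (ℝ × ℝ)} (hT : T ⊆ I)
    (hcl : ∀ p ∈ T, ∀ q ∈ T, (iv p ∩ iv q).Nonempty) : T.card ≤ CliqueNum I := by
  apply le_csSup
  · refine ⟨I.card, ?_⟩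
    rintro n ⟨T', hT', _, rfl⟩
    exact Finset.card_le_card hT'
  · exact ⟨T, hT, hcl, rfl⟩

lemma cliqueNum_le (I : Finset (ℝ × ℝ)) {m : ℕ}
    (h : ∀ T ⊆ I, (∀ p ∈ T, ∀ q ∈ T, (iv p ∩ iv q).Nonempty) → T.card ≤ m) :
    CliqueNum I ≤ m := by
  apply csSup_le
  · exact ⟨0, ⟨∅, Finset.empty_subset _, by simp, rfl⟩⟩
  · rintro n ⟨T, hT, hcl, rfl⟩
    exact h T hT hcl

lemma exists_max_clique (I : Finset (ℝ × ℝ)) :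
    ∃ T ⊆ I, (∀ p ∈ T, ∀ q ∈ T, (iv p ∩ iv q).Nonempty) ∧ T.card = CliqueNum I := by
  have := Nat.sSup_mem (s := {n | ∃ T ⊆ I, (∀ p ∈ T, ∀ q ∈ T, (iv p ∩ iv q).Nonempty) ∧ T.card = n})
    ⟨0, ⟨∅, Finset.empty_subset _, by simp, rfl⟩⟩
    ⟨I.card, by rintro n ⟨T', hT', _, rfl⟩; exact Finset.card_le_card hT'⟩
  exact this


/-- Greedy construction of a 2-colorable set of maximal intervals covering all
points of `X` to the right of `t`. -/
lemma buildS (I : Finset (ℝ × ℝ)) (hiv : ∀ p ∈ I, p.1 ≤ p.2) (X : Finset ℝ)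
    (HX : ∀ x ∈ X, ∃ p ∈ I, x ∈ iv p) :
    ∀ n : ℕ, ∀ t : ℝ, ∀ c : Bool, (X.filter (fun x => t < x)).card ≤ n →
    ∃ (S : Finset (ℝ × ℝ)) (g : ℝ × ℝ → Bool),
      (∀ s ∈ S, s ∈ I ∧ (∀ r' ∈ I, ¬ iv s ⊂ iv r') ∧ t < s.2) ∧
      (∀ x ∈ X, t < x → ∃ s ∈ S, x ∈ iv s) ∧
      (∀ s ∈ S, ∀ s' ∈ S, s ≠ s' → (iv s ∩ iv s').Nonempty → g s ≠ g s') ∧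
      (∀ s ∈ S, s.1 ≤ t → g s = c) := by
  intro n
  induction n with
  | zero =>
    intro t c hcard
    refine ⟨∅, fun _ => c, by simp, ?_, by simp, by simp⟩
    intro x hx htx
    exfalso
    have hmem : x ∈ X.filter (fun x => t < x) := Finset.mem_filter.mpr ⟨hx, htx⟩
    have := Finset.card_pos.mpr ⟨x, hmem⟩
    omega
  | succ n ih =>
    intro t c hcard
    by_cases hne : (X.filter (fun x => t < x)).Nonempty
    · obtain ⟨hxsX, htxs⟩ := Finset.mem_filter.mp
        (Finset.min'_mem (X.filter (fun x => t < x)) hne)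
      set xs := (X.filter (fun x => t < x)).min' hne with hxs
      have hxsmin : ∀ x ∈ X, t < x → xs ≤ x := fun x hx htx =>
        Finset.min'_le _ x (Finset.mem_filter.mpr ⟨hx, htx⟩)
      obtain ⟨p, hpI, hpx⟩ := HX xs hxsX
      obtain ⟨r, hrI, hpr, hrmax⟩ := exists_isMax I hiv hpI
      have hMne : (I.filter (fun r => (∀ r' ∈ I, ¬ iv r ⊂ iv r') ∧ xs ∈ iv r)).Nonempty :=
        ⟨r, Finset.mem_filter.mpr ⟨hrI, hrmax, hpr hpx⟩⟩
      obtain ⟨s, hsM, hsmax2⟩ :=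
        (I.filter (fun r => (∀ r' ∈ I, ¬ iv r ⊂ iv r') ∧ xs ∈ iv r)).exists_max_image
          Prod.snd hMne
      obtain ⟨hsI, hsmaxI, hsxs⟩ := Finset.mem_filter.mp hsM
      obtain ⟨hsxs1, hsxs2⟩ := hsxs
      have hs1 : s.1 ≤ xs := hsxs1
      have hs2 : xs ≤ s.2 := hsxs2
      have hsub : X.filter (fun x => s.2 < x) ⊆ X.filter (fun x => t < x) := by
        intro x hx
        obtain ⟨hx1, hx2⟩ := Finset.mem_filter.mp hx
        exact Finset.mem_filter.mpr ⟨hx1, by linarith⟩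
      have hxs_not : xs ∉ X.filter (fun x => s.2 < x) := by
        simp only [Finset.mem_filter]
        rintro ⟨-, h⟩
        linarith
      have hcard' : (X.filter (fun x => s.2 < x)).card ≤ n := by
        have hss : X.filter (fun x => s.2 < x) ⊂ X.filter (fun x => t < x) :=
          ⟨hsub, fun hsup => hxs_not (hsup (Finset.mem_filter.mpr ⟨hxsX, htxs⟩))⟩
        have := Finset.card_lt_card hss
        omega
      obtain ⟨S', g', hi', hii', hiii', hivv'⟩ := ih (s.2) (!c) hcard'
      have hne' : ∀ u ∈ S', u ≠ s := by
        intro u hu h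
        have := (hi' u hu).2.2
        rw [h] at this
        exact lt_irrefl _ this
      refine ⟨insert s S', fun r => if r = s then c else g' r, ?_, ?_, ?_, ?_⟩
      · intro a ha
        rcases Finset.mem_insert.mp ha with rfl | haS
        · exact ⟨hsI, hsmaxI, lt_of_lt_of_le htxs hs2⟩
        · obtain ⟨h1, h2, h3⟩ := hi' a haS
          exact ⟨h1, h2, lt_trans (lt_of_lt_of_le htxs hs2) h3⟩
      · intro x hx htx
        by_cases hxle : x ≤ s.2
        · exact ⟨s, Finset.mem_insert_self _ _,
            Set.mem_Icc.mpr ⟨le_trans hs1 (hxsmin x hx htx), hxle⟩⟩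
        · push_neg at hxle
          obtain ⟨s', h1, h2⟩ := hii' x hx hxle
          exact ⟨s', Finset.mem_insert_of_mem h1, h2⟩
      · intro a ha b hb hab hint
        rcases Finset.mem_insert.mp ha with rfl | haS
        · rcases Finset.mem_insert.mp hb with rfl | hbS
          · exact absurd rfl hab
          · have hb1 : b.1 ≤ a.2 := by
              obtain ⟨y, hy1, hy2⟩ := hint
              exact le_trans (Set.mem_Icc.mp hy2).1 (Set.mem_Icc.mp hy1).2
            have hgb : g' b = !c := hivv' b hbS hb1
            simp only [if_pos rfl, if_neg (hne' b hbS)]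
            rw [hgb]
            simp
        · rcases Finset.mem_insert.mp hb with rfl | hbS
          · have ha1 : a.1 ≤ b.2 := by
              obtain ⟨y, hy1, hy2⟩ := hint
              exact le_trans (Set.mem_Icc.mp hy1).1 (Set.mem_Icc.mp hy2).2
            have hga : g' a = !c := hivv' a haS ha1
            simp only [if_pos rfl, if_neg (hne' a haS)]
            rw [hga]
            simp
          · simp only [if_neg (hne' a haS), if_neg (hne' b hbS)]
            exact hiii' a haS b hbS hab hint
      · intro a ha hle
        rcases Finset.mem_insert.mp ha with rfl | haS
        · simp
        · exfalso
          obtain ⟨h1, h2, h3⟩ := hi' a haS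
          have hxa : xs ∈ iv a := Set.mem_Icc.mpr ⟨by linarith, by linarith⟩
          have haM : a ∈ I.filter (fun r => (∀ r' ∈ I, ¬ iv r ⊂ iv r') ∧ xs ∈ iv r) :=
            Finset.mem_filter.mpr ⟨h1, h2, hxa⟩
          have := hsmax2 a haM
          linarith
    · refine ⟨∅, fun _ => c, by simp, ?_, by simp, by simp⟩
      intro x hx htx
      exact absurd ⟨x, Finset.mem_filter.mpr ⟨hx, htx⟩⟩ hne


lemma main_aux : ∀ n : ℕ, ∀ I : Finset (ℝ × ℝ), I.card ≤ n → (∀ p ∈ I, p.1 ≤ p.2) →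
    ∃ f : ℝ × ℝ → ℕ, ProperColoring I f ∧
      ∀ p ∈ I, f p ∈ Finset.Icc 1 (2 * CliqueNum I - 1) := by
  intro n
  induction n with
  | zero =>
    intro I hcard hiv
    have hI : I = ∅ := Finset.card_eq_zero.mp (Nat.le_zero.mp hcard)
    subst hI
    exact ⟨fun _ => 1, fun p hp => absurd hp (by simp), fun p hp => absurd hp (by simp)⟩
  | succ n ih =>
    intro I hcard hiv
    have hone : ∀ p ∈ I, 1 ≤ CliqueNum I := by
      intro p hp
      have hcl : ∀ a ∈ ({p} : Finset (ℝ × ℝ)), ∀ b ∈ ({p} : Finset (ℝ × ℝ)),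
          (iv a ∩ iv b).Nonempty := by
        intro a ha b hb
        simp only [Finset.mem_singleton] at ha hb
        rw [ha, hb]
        exact ⟨p.1, mem_iv_self (hiv p hp), mem_iv_self (hiv p hp)⟩
      have := clique_card_le I (by simpa using hp) hcl
      simpa using this
    by_cases hw : CliqueNum I ≤ 1
    · -- trivial case: no two distinct intervals intersect
      have hno : ∀ p ∈ I, ∀ q ∈ I, p ≠ q → ¬ (iv p ∩ iv q).Nonempty := by
        intro p hp q hq hpq hint
        have hcl : ∀ a ∈ ({p, q} : Finset (ℝ × ℝ)), ∀ b ∈ ({p, q} : Finset (ℝ × ℝ)),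
            (iv a ∩ iv b).Nonempty := by
          intro a ha b hb
          simp only [Finset.mem_insert, Finset.mem_singleton] at ha hb
          obtain ⟨y, hy1, hy2⟩ := hint
          rcases ha with ha | ha <;> rcases hb with hb | hb <;> rw [ha, hb]
          · exact ⟨p.1, mem_iv_self (hiv p hp), mem_iv_self (hiv p hp)⟩
          · exact ⟨y, hy1, hy2⟩
          · exact ⟨y, hy2, hy1⟩
          · exact ⟨q.1, mem_iv_self (hiv q hq), mem_iv_self (hiv q hq)⟩
        have h2 : ({p, q} : Finset (ℝ × ℝ)).card ≤ CliqueNum I := by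
          apply clique_card_le
          · intro a ha
            simp only [Finset.mem_insert, Finset.mem_singleton] at ha
            rcases ha with rfl | rfl <;> assumption
          · exact hcl
        rw [Finset.card_insert_of_notMem (by simpa using hpq), Finset.card_singleton] at h2
        omega
      refine ⟨fun _ => 1, ?_, ?_⟩
      · intro p hp q hq
        constructor
        · intro harc
          exfalso
          have hpq : p ≠ q := by
            rintro rfl
            exact (ssubset_irrefl _) harc
          exact hno p hp q hq hpq
            ⟨q.1, harc.subset (mem_iv_self (hiv q hq)), mem_iv_self (hiv q hq)⟩
        · intro hov
          exfalso
          have hpq : p ≠ q := by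
            rintro rfl
            exact hov.2.1 subset_rfl
          exact hno p hp q hq hpq hov.1
      · intro p hp
        simp only [Finset.mem_Icc]
        have := hone p hp
        omega
    · push_neg at hw
      obtain ⟨T₀, hT₀I, hT₀cl, hT₀card⟩ := exists_max_clique I
      have hT₀ne : T₀.Nonempty := Finset.card_pos.mp (by omega)
      have hIne : I.Nonempty := ⟨hT₀ne.choose, hT₀I hT₀ne.choose_spec⟩
      set X := (I.image Prod.fst).filter
        (fun x => CliqueNum I ≤ (I.filter (fun q => x ∈ iv q)).card) with hX
      have HX : ∀ x ∈ X, ∃ p ∈ I, x ∈ iv p := by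
        intro x hx
        obtain ⟨p, hpI, rfl⟩ := Finset.mem_image.mp (Finset.mem_filter.mp hx).1
        exact ⟨p, hpI, mem_iv_self (hiv p hpI)⟩
      set t₀ := (I.image Prod.fst).min' (hIne.image _) - 1 with ht₀
      have ht₀lt : ∀ x ∈ X, t₀ < x := by
        intro x hx
        have hx1 := (Finset.mem_filter.mp hx).1
        have := Finset.min'_le _ x hx1
        linarith
      obtain ⟨S, g, hSi, hSii, hSiii, hSiv⟩ :=
        buildS I hiv X HX (X.filter (fun x => t₀ < x)).card t₀ true le_rfl
      have hit : ∀ T, T ⊆ I → (∀ p ∈ T, ∀ q ∈ T, (iv p ∩ iv q).Nonempty) →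
          T.card = CliqueNum I → ∃ s ∈ S, s ∈ T := by
        intro T hTI hTcl hTcard
        have hTne : T.Nonempty := Finset.card_pos.mp (by omega)
        obtain ⟨z, hzT, hzmax⟩ := T.exists_max_image Prod.fst hTne
        have hTsub : T ⊆ I.filter (fun q => z.1 ∈ iv q) := by
          intro q hq
          refine Finset.mem_filter.mpr ⟨hTI hq, ?_⟩
          obtain ⟨y, hy1, hy2⟩ := hTcl z hzT q hq
          exact Set.mem_Icc.mpr
            ⟨hzmax q hq, le_trans (Set.mem_Icc.mp hy1).1 (Set.mem_Icc.mp hy2).2⟩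
        have hCcl : ∀ p ∈ I.filter (fun q => z.1 ∈ iv q),
            ∀ q ∈ I.filter (fun q => z.1 ∈ iv q), (iv p ∩ iv q).Nonempty := by
          intro p hp q hq
          exact ⟨z.1, (Finset.mem_filter.mp hp).2, (Finset.mem_filter.mp hq).2⟩
        have hCle : (I.filter (fun q => z.1 ∈ iv q)).card ≤ CliqueNum I :=
          clique_card_le I (Finset.filter_subset _ _) hCcl
        have hTC : T = I.filter (fun q => z.1 ∈ iv q) :=
          Finset.eq_of_subset_of_card_le hTsub (by omega)
        have hzX : z.1 ∈ X := by
          refine Finset.mem_filter.mpr ⟨Finset.mem_image.mpr ⟨z, hTI hzT, rfl⟩, ?_⟩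
          rw [← hTC]
          omega
        obtain ⟨s, hsS, hsz⟩ := hSii z.1 hzX (ht₀lt _ hzX)
        refine ⟨s, hsS, ?_⟩
        rw [hTC]
        exact Finset.mem_filter.mpr ⟨(hSi s hsS).1, hsz⟩
      obtain ⟨s₀, hs₀S, hs₀T₀⟩ := hit T₀ hT₀I hT₀cl hT₀card
      have hs₀I : s₀ ∈ I := (hSi s₀ hs₀S).1
      set I₂ := I \ S with hI₂
      have hI₂sub : I₂ ⊆ I := Finset.sdiff_subset
      have hI₂card : I₂.card ≤ n := by
        have hss : I₂ ⊂ I :=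
          ⟨hI₂sub, fun hsup => (Finset.mem_sdiff.mp (hsup hs₀I)).2 hs₀S⟩
        have := Finset.card_lt_card hss
        omega
      have hω₂ : CliqueNum I₂ ≤ CliqueNum I - 1 := by
        apply cliqueNum_le
        intro T hT hcl
        have h1 : T.card ≤ CliqueNum I := clique_card_le I (hT.trans hI₂sub) hcl
        by_contra hcon
        push_neg at hcon
        have hTcard : T.card = CliqueNum I := by omega
        obtain ⟨s, hsS, hsT⟩ := hit T (hT.trans hI₂sub) hcl hTcard
        exact (Finset.mem_sdiff.mp (hT hsT)).2 hsS
      obtain ⟨f₂, hf₂p, hf₂b⟩ := ih I₂ hI₂card (fun p hp => hiv p (hI₂sub hp))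
      have hcase : ∀ p ∈ I, p ∉ S → p ∈ I₂ := fun p hp hn => Finset.mem_sdiff.mpr ⟨hp, hn⟩
      have hf₂lo : ∀ p ∈ I₂, 1 ≤ f₂ p := fun p hp => (Finset.mem_Icc.mp (hf₂b p hp)).1
      have hf₂hi : ∀ p ∈ I₂, f₂ p ≤ 2 * CliqueNum I - 3 := by
        intro p hp
        have h1 := (Finset.mem_Icc.mp (hf₂b p hp)).2
        omega
      refine ⟨fun p => if p ∈ S then (if g p then 1 else 2) else f₂ p + 2, ?_, ?_⟩
      · intro p hp q hq
        constructor
        · intro harc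
          by_cases hqS : q ∈ S
          · exact absurd harc ((hSi q hqS).2.1 p hp)
          · have hq2 := hcase q hq hqS
            by_cases hpS : p ∈ S
            · simp only [if_pos hpS, if_neg hqS]
              have := hf₂lo q hq2
              cases g p <;> simp <;> omega
            · have hp2 := hcase p hp hpS
              simp only [if_neg hpS, if_neg hqS]
              have := (hf₂p p hp2 q hq2).1 harc
              omega
        · intro hov
          have hpq : p ≠ q := by
            rintro rfl
            exact hov.2.1 subset_rfl
          by_cases hpS : p ∈ S <;> by_cases hqS : q ∈ S
          · have hg := hSiii p hpS q hqS hpq hov.1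
            simp only [if_pos hpS, if_pos hqS]
            rcases Bool.eq_false_or_eq_true (g p) with hgp | hgp <;>
              rcases Bool.eq_false_or_eq_true (g q) with hgq | hgq <;>
              rw [hgp, hgq] at hg ⊢ <;> simp at hg ⊢
          · have := hf₂lo q (hcase q hq hqS)
            simp only [if_pos hpS, if_neg hqS]
            cases g p <;> simp <;> omega
          · have := hf₂lo p (hcase p hp hpS)
            simp only [if_neg hpS, if_pos hqS]
            cases g q <;> simp <;> omega
          · have := (hf₂p p (hcase p hp hpS) q (hcase q hq hqS)).2 hov
            simp only [if_neg hpS, if_neg hqS]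
            omega
      · intro p hp
        simp only [Finset.mem_Icc]
        by_cases hpS : p ∈ S
        · simp only [if_pos hpS]
          cases g p <;> simp <;> omega
        · have hp2 := hcase p hp hpS
          have h1 := hf₂lo p hp2
          have h2 := hf₂hi p hp2
          simp only [if_neg hpS]
          omega

/-- Every containment interval graph `C[I]` admits a proper coloring using at most
`2·ω(C[I]) − 1` colors. -/
theorem stmt3 (I : Finset (ℝ × ℝ)) (hiv : ∀ p ∈ I, p.1 ≤ p.2) :
    ∃ f : ℝ × ℝ → ℕ, ProperColoring I f ∧
      ∀ p ∈ I, f p ∈ Finset.Icc 1 (2 * CliqueNum I - 1) := by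
  exact main_aux I.card I le_rfl hiv
end

section
/- For every n ≥ 1 there exists a set I_n of 3·2^{n−1} − 2 intervals such that the containment interval graph C[I_n] has clique number n and chromatic number exactly 2n − 1. -/
namespace S5

lemma mem_iv {x : ℝ} {p : ℝ × ℝ} : x ∈ iv p ↔ p.1 ≤ x ∧ x ≤ p.2 := Set.mem_Icc

/-- endpoint characterizations -/
lemma subset_iff {p q : ℝ × ℝ} (hp : p.1 ≤ p.2) :
    iv p ⊆ iv q ↔ q.1 ≤ p.1 ∧ p.2 ≤ q.2 := Set.Icc_subset_Icc_iff hp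

lemma inter_iff {p q : ℝ × ℝ} (hp : p.1 ≤ p.2) (hq : q.1 ≤ q.2) :
    (iv p ∩ iv q).Nonempty ↔ q.1 ≤ p.2 ∧ p.1 ≤ q.2 := by
  unfold iv
  rw [Set.Icc_inter_Icc, Set.nonempty_Icc, sup_le_iff, le_inf_iff, le_inf_iff]
  constructor
  · rintro ⟨⟨_, h1⟩, h2, _⟩; exact ⟨h2, h1⟩
  · rintro ⟨h1, h2⟩; exact ⟨⟨hp, h2⟩, h1, hq⟩

lemma ssubset_iff {p q : ℝ × ℝ} (hp : p.1 ≤ p.2) (hq : q.1 ≤ q.2) :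
    iv p ⊂ iv q ↔ (q.1 ≤ p.1 ∧ p.2 ≤ q.2) ∧ ¬(p.1 ≤ q.1 ∧ q.2 ≤ p.2) := by
  rw [Set.ssubset_def, subset_iff hp, subset_iff hq]

lemma overlaps_iff {p q : ℝ × ℝ} (hp : p.1 ≤ p.2) (hq : q.1 ≤ q.2) :
    Overlaps p q ↔ (q.1 ≤ p.2 ∧ p.1 ≤ q.2) ∧ ¬(q.1 ≤ p.1 ∧ p.2 ≤ q.2) ∧ ¬(p.1 ≤ q.1 ∧ q.2 ≤ p.2) := by
  unfold Overlaps
  rw [inter_iff hp hq, subset_iff hp, subset_iff hq]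

noncomputable def mapL (p : ℝ × ℝ) : ℝ × ℝ := (3/10 * p.1, 3/10 * p.2)
noncomputable def mapR (p : ℝ × ℝ) : ℝ × ℝ := (7/10 + 3/10 * p.1, 7/10 + 3/10 * p.2)
noncomputable def lv : ℝ × ℝ := (0, 3/5)
noncomputable def rv : ℝ × ℝ := (2/5, 1)

open Classical in
noncomputable def A : ℕ → Finset (ℝ × ℝ)
  | 0 => {((0:ℝ), (1:ℝ))}
  | (k+1) => insert lv (insert rv ((A k).image mapL ∪ (A k).image mapR))

/-- invariant: all intervals in A k live in [0,1] and are nonempty -/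
lemma A_bounds : ∀ k, ∀ p ∈ A k, 0 ≤ p.1 ∧ p.1 ≤ p.2 ∧ p.2 ≤ 1 := by
  intro k
  induction k with
  | zero => intro p hp; simp [A] at hp; subst hp; norm_num
  | succ k ih =>
    intro p hp
    simp only [A, Finset.mem_insert, Finset.mem_union, Finset.mem_image] at hp
    rcases hp with rfl | rfl | ⟨a, ha, rfl⟩ | ⟨a, ha, rfl⟩
    · norm_num [lv]
    · norm_num [rv]
    · obtain ⟨h1, h2, h3⟩ := ih a ha
      simp only [mapL]; constructor <;> [nlinarith; constructor <;> nlinarith]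
    · obtain ⟨h1, h2, h3⟩ := ih a ha
      simp only [mapR]; constructor <;> [nlinarith; constructor <;> nlinarith]

lemma mapL_ne_lv {a : ℝ × ℝ} (ha : a.2 ≤ 1) : mapL a ≠ lv := by
  intro h
  have := congrArg Prod.snd h
  simp [mapL, lv] at this; linarith

lemma mapL_ne_rv {a : ℝ × ℝ} (ha : a.2 ≤ 1) : mapL a ≠ rv := by
  intro h
  have := congrArg Prod.snd h
  simp [mapL, rv] at this; linarith

lemma mapR_ne_lv {a : ℝ × ℝ} (ha : 0 ≤ a.1) : mapR a ≠ lv := by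
  intro h
  have := congrArg Prod.fst h
  simp [mapR, lv] at this; linarith

lemma mapR_ne_rv {a : ℝ × ℝ} (ha : 0 ≤ a.1) : mapR a ≠ rv := by
  intro h
  have := congrArg Prod.fst h
  simp [mapR, rv] at this; linarith

lemma mapL_ne_mapR {a b : ℝ × ℝ} (ha : a.2 ≤ 1) (hb : 0 ≤ b.2) : mapL a ≠ mapR b := by
  intro h
  have := congrArg Prod.fst h
  have h2 := congrArg Prod.snd h
  simp [mapL, mapR] at this h2; linarith

lemma mapL_inj : Function.Injective mapL := by
  intro a b h
  have h1 := congrArg Prod.fst h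
  have h2 := congrArg Prod.snd h
  simp [mapL] at h1 h2
  exact Prod.ext (by linarith) (by linarith)

lemma mapR_inj : Function.Injective mapR := by
  intro a b h
  have h1 := congrArg Prod.fst h
  have h2 := congrArg Prod.snd h
  simp [mapR] at h1 h2
  exact Prod.ext (by linarith) (by linarith)

lemma A_card : ∀ k, (A k).card = 3 * 2 ^ k - 2 := by
  intro k
  induction k with
  | zero => simp [A]
  | succ k ih =>
    have hb := A_bounds k
    have hdisj : Disjoint ((A k).image mapL) ((A k).image mapR) := by
      rw [Finset.disjoint_left]
      rintro x hx hy
      simp only [Finset.mem_image] at hx hy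
      obtain ⟨a, ha, rfl⟩ := hx
      obtain ⟨b, hb', h⟩ := hy
      exact mapL_ne_mapR (hb a ha).2.2 (le_trans (hb b hb').1 (hb b hb').2.1) h.symm
    have h1 : lv ∉ insert rv ((A k).image mapL ∪ (A k).image mapR) := by
      simp only [Finset.mem_insert, Finset.mem_union, Finset.mem_image]
      push_neg
      refine ⟨by norm_num [lv, rv], fun a ha => (mapL_ne_lv (hb a ha).2.2), fun a ha => (mapR_ne_lv (hb a ha).1)⟩
    have h2 : rv ∉ (A k).image mapL ∪ (A k).image mapR := by
      simp only [Finset.mem_union, Finset.mem_image]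
      push_neg
      exact ⟨fun a ha => (mapL_ne_rv (hb a ha).2.2), fun a ha => (mapR_ne_rv (hb a ha).1)⟩
    rw [A, Finset.card_insert_of_notMem h1, Finset.card_insert_of_notMem h2,
      Finset.card_union_of_disjoint hdisj,
      Finset.card_image_of_injective _ mapL_inj, Finset.card_image_of_injective _ mapR_inj, ih]
    have : 1 ≤ 2 ^ k := Nat.one_le_two_pow
    omega

end S5

namespace S5

lemma mem_A_succ {k : ℕ} {p : ℝ × ℝ} : p ∈ A (k+1) ↔
    p = lv ∨ p = rv ∨ (∃ a ∈ A k, mapL a = p) ∨ (∃ a ∈ A k, mapR a = p) := by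
  simp [A, Finset.mem_insert, Finset.mem_union, Finset.mem_image]

lemma cover_bound : ∀ k, ∀ x : ℝ, ∀ T ⊆ A k, (∀ p ∈ T, x ∈ iv p) → T.card ≤ k + 1 := by
  intro k
  induction k with
  | zero =>
    intro x T hT _
    calc T.card ≤ ({((0:ℝ),(1:ℝ))} : Finset (ℝ × ℝ)).card := Finset.card_le_card hT
    _ = 1 := by simp
  | succ k ih =>
    intro x T hT hx
    have hb := A_bounds k
    -- generic helper for the two scaled cases
    have main : ∀ (m : ℝ × ℝ → ℝ × ℝ) (v : ℝ × ℝ) (y : ℝ), Function.Injective m →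
        (∀ p ∈ T, p = v ∨ ∃ a ∈ A k, m a = p) →
        (∀ a ∈ A k, x ∈ iv (m a) → y ∈ iv a) → T.card ≤ k + 2 := by
      intro m v y hinj hclass htrans
      classical
      set S : Finset (ℝ × ℝ) := (A k).filter (fun a => x ∈ iv (m a)) with hS
      have hsub : T.erase v ⊆ S.image m := by
        intro p hp
        have hpT := Finset.mem_of_mem_erase hp
        have hpv := Finset.ne_of_mem_erase hp
        rcases hclass p hpT with rfl | ⟨a, ha, rfl⟩
        · exact absurd rfl hpv
        · exact Finset.mem_image_of_mem m (Finset.mem_filter.2 ⟨ha, hx _ hpT⟩)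
      have hScard : S.card ≤ k + 1 := by
        refine ih y S (Finset.filter_subset _ _) ?_
        intro a ha
        rw [Finset.mem_filter] at ha
        exact htrans a ha.1 ha.2
      have h1 : (T.erase v).card ≤ k + 1 := by
        calc (T.erase v).card ≤ (S.image m).card := Finset.card_le_card hsub
        _ = S.card := Finset.card_image_of_injective _ hinj
        _ ≤ k + 1 := hScard
      by_cases hv : v ∈ T
      · have := Finset.card_erase_add_one hv
        omega
      · rw [Finset.erase_eq_of_notMem hv] at h1
        omega
    rcases le_or_gt x (3/10) with hx1 | hx1
    · -- only lv and mapL intervals can contain x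
      refine main mapL lv ((10:ℝ)/3 * x) mapL_inj ?_ ?_
      · intro p hp
        rcases mem_A_succ.1 (hT hp) with rfl | rfl | ⟨a, ha, rfl⟩ | ⟨a, ha, rfl⟩
        · exact Or.inl rfl
        · exfalso
          have := hx _ hp
          rw [mem_iv] at this
          simp only [rv] at this
          linarith [this.1]
        · exact Or.inr ⟨a, ha, rfl⟩
        · exfalso
          have := hx _ hp
          rw [mem_iv] at this
          simp only [mapR] at this
          linarith [this.1, (hb a ha).1]
      · intro a _ hxa
        rw [mem_iv] at hxa ⊢
        simp only [mapL] at hxa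
        constructor <;> linarith [hxa.1, hxa.2]
    rcases lt_or_ge x (7/10) with hx2 | hx2
    · -- only lv and rv can contain x
      have : T ⊆ ({lv, rv} : Finset (ℝ × ℝ)) := by
        intro p hp
        rcases mem_A_succ.1 (hT hp) with rfl | rfl | ⟨a, ha, rfl⟩ | ⟨a, ha, rfl⟩
        · simp
        · simp
        · exfalso
          have := hx _ hp
          rw [mem_iv] at this
          simp only [mapL] at this
          linarith [this.2, (hb a ha).2.2]
        · exfalso
          have := hx _ hp
          rw [mem_iv] at this
          simp only [mapR] at this
          linarith [this.1, (hb a ha).1]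
      calc T.card ≤ ({lv, rv} : Finset (ℝ × ℝ)).card := Finset.card_le_card this
      _ ≤ 2 := Finset.card_insert_le _ _ |>.trans (by simp)
      _ ≤ k + 2 := by omega
    · -- only rv and mapR intervals can contain x
      refine main mapR rv ((10:ℝ)/3 * (x - 7/10)) mapR_inj ?_ ?_
      · intro p hp
        rcases mem_A_succ.1 (hT hp) with rfl | rfl | ⟨a, ha, rfl⟩ | ⟨a, ha, rfl⟩
        · exfalso
          have := hx _ hp
          rw [mem_iv] at this
          simp only [lv] at this
          linarith [this.2]
        · exact Or.inl rfl
        · exfalso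
          have := hx _ hp
          rw [mem_iv] at this
          simp only [mapL] at this
          linarith [this.2, (hb a ha).2.2]
        · exact Or.inr ⟨a, ha, rfl⟩
      · intro a _ hxa
        rw [mem_iv] at hxa ⊢
        simp only [mapR] at hxa
        constructor <;> linarith [hxa.1, hxa.2]

lemma helly (T : Finset (ℝ × ℝ)) (hT : ∀ p ∈ T, p.1 ≤ p.2)
    (h : ∀ p ∈ T, ∀ q ∈ T, (iv p ∩ iv q).Nonempty) (hne : T.Nonempty) :
    ∃ x, ∀ p ∈ T, x ∈ iv p := by
  obtain ⟨p0, hp0, hmax⟩ := Finset.exists_max_image T (fun p => p.1) hne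
  refine ⟨p0.1, fun q hq => ?_⟩
  rw [mem_iv]
  exact ⟨hmax q hq, ((inter_iff (hT p0 hp0) (hT q hq)).1 (h p0 hp0 q hq)).2⟩

lemma chain : ∀ k, ∃ T ⊆ A k, (∀ p ∈ T, (0:ℝ) ∈ iv p) ∧ T.card = k + 1 := by
  intro k
  induction k with
  | zero =>
    exact ⟨{((0:ℝ),(1:ℝ))}, Finset.Subset.refl _, by intro p hp; simp at hp; subst hp; simp [iv], by simp⟩
  | succ k ih =>
    classical
    obtain ⟨T, hTA, hT0, hTc⟩ := ih
    refine ⟨insert lv (T.image mapL), ?_, ?_, ?_⟩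
    · intro p hp
      rcases Finset.mem_insert.1 hp with rfl | hp
      · exact mem_A_succ.2 (Or.inl rfl)
      · obtain ⟨a, ha, rfl⟩ := Finset.mem_image.1 hp
        exact mem_A_succ.2 (Or.inr (Or.inr (Or.inl ⟨a, hTA ha, rfl⟩)))
    · intro p hp
      rcases Finset.mem_insert.1 hp with rfl | hp
      · rw [mem_iv]; norm_num [lv]
      · obtain ⟨a, ha, rfl⟩ := Finset.mem_image.1 hp
        have := hT0 a ha
        rw [mem_iv] at this ⊢
        simp only [mapL]
        constructor <;> linarith [this.1, this.2]
    · have hnot : lv ∉ T.image mapL := by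
        rw [Finset.mem_image]
        rintro ⟨a, ha, h⟩
        exact mapL_ne_lv (A_bounds k a (hTA ha)).2.2 h
      rw [Finset.card_insert_of_notMem hnot, Finset.card_image_of_injective _ mapL_inj, hTc]

lemma cliqueNum_A (k : ℕ) : CliqueNum (A k) = k + 1 := by
  have hub : ∀ m ∈ {n | ∃ T ⊆ A k, (∀ p ∈ T, ∀ q ∈ T, (iv p ∩ iv q).Nonempty) ∧ T.card = n},
      m ≤ k + 1 := by
    rintro m ⟨T, hTA, hpair, rfl⟩
    rcases T.eq_empty_or_nonempty with rfl | hne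
    · simp
    · obtain ⟨x, hx⟩ := helly T (fun p hp => (A_bounds k p (hTA hp)).2.1) hpair hne
      exact cover_bound k x T hTA hx
  have hmem : k + 1 ∈ {n | ∃ T ⊆ A k, (∀ p ∈ T, ∀ q ∈ T, (iv p ∩ iv q).Nonempty) ∧ T.card = n} := by
    obtain ⟨T, hTA, hT0, hTc⟩ := chain k
    exact ⟨T, hTA, fun p hp q hq => ⟨0, hT0 p hp, hT0 q hq⟩, hTc⟩
  unfold CliqueNum
  exact le_antisymm (csSup_le ⟨k+1, hmem⟩ hub) (le_csSup ⟨k+1, hub⟩ hmem)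

end S5

namespace S5

noncomputable def col : ℕ → (ℝ × ℝ) → ℕ
  | 0, _ => 1
  | (k+1), p =>
      if p = lv then 1 else if p = rv then 2
      else if p.2 ≤ 3/10 then col k (10/3 * p.1, 10/3 * p.2) + 1
      else col k (10/3 * (p.1 - 7/10), 10/3 * (p.2 - 7/10)) + 2

lemma col_lv (k : ℕ) : col (k+1) lv = 1 := by simp [col]

lemma col_rv (k : ℕ) : col (k+1) rv = 2 := by
  have : rv ≠ lv := by simp [lv, rv]
  simp [col, this]

lemma col_mapL {k : ℕ} {a : ℝ × ℝ} (h1 : 0 ≤ a.1) (h2 : a.1 ≤ a.2) (h3 : a.2 ≤ 1) :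
    col (k+1) (mapL a) = col k a + 1 := by
  have hne1 : mapL a ≠ lv := mapL_ne_lv h3
  have hne2 : mapL a ≠ rv := mapL_ne_rv h3
  have hle : (mapL a).2 ≤ 3/10 := by simp only [mapL]; linarith
  rw [col, if_neg hne1, if_neg hne2, if_pos hle]
  congr 1
  have : ((10:ℝ)/3 * (mapL a).1, (10:ℝ)/3 * (mapL a).2) = a := by
    refine Prod.ext ?_ ?_ <;> simp only [mapL] <;> ring
  rw [this]

lemma col_mapR {k : ℕ} {a : ℝ × ℝ} (h1 : 0 ≤ a.1) (h2 : a.1 ≤ a.2) (h3 : a.2 ≤ 1) :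
    col (k+1) (mapR a) = col k a + 2 := by
  have hne1 : mapR a ≠ lv := mapR_ne_lv h1
  have hne2 : mapR a ≠ rv := mapR_ne_rv h1
  have hle : ¬ (mapR a).2 ≤ 3/10 := by simp only [mapR]; push_neg; linarith
  rw [col, if_neg hne1, if_neg hne2, if_neg hle]
  congr 1
  have : ((10:ℝ)/3 * ((mapR a).1 - 7/10), (10:ℝ)/3 * ((mapR a).2 - 7/10)) = a := by
    refine Prod.ext ?_ ?_ <;> simp only [mapR] <;> ring
  rw [this]

lemma col_bounds : ∀ k, ∀ p ∈ A k, 1 ≤ col k p ∧ col k p ≤ 2 * k + 1 := by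
  intro k
  induction k with
  | zero => intro p _; simp [col]
  | succ k ih =>
    intro p hp
    rcases mem_A_succ.1 hp with rfl | rfl | ⟨a, ha, rfl⟩ | ⟨a, ha, rfl⟩
    · rw [col_lv]; omega
    · rw [col_rv]; omega
    · obtain ⟨b1, b2, b3⟩ := A_bounds k a ha
      rw [col_mapL b1 b2 b3]
      have := ih a ha; omega
    · obtain ⟨b1, b2, b3⟩ := A_bounds k a ha
      rw [col_mapR b1 b2 b3]
      have := ih a ha; omega

/-- disjoint intervals (p entirely left of q): no relation at all -/
lemma no_rel {p q : ℝ × ℝ} (hp : p.1 ≤ p.2) (hq : q.1 ≤ q.2) (h : p.2 < q.1) :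
    ¬ iv q ⊂ iv p ∧ ¬ iv p ⊂ iv q ∧ ¬ Overlaps p q ∧ ¬ Overlaps q p := by
  rw [ssubset_iff hq hp, ssubset_iff hp hq, overlaps_iff hp hq, overlaps_iff hq hp]
  refine ⟨?_, ?_, ?_, ?_⟩ <;> rintro ⟨⟨h1, h2⟩, -⟩ <;> linarith

/-- q strictly inside p: arc (p,q), no overlap -/
lemma strict_in {p q : ℝ × ℝ} (hp : p.1 ≤ p.2) (hq : q.1 ≤ q.2)
    (h1 : p.1 ≤ q.1) (h2 : q.2 ≤ p.2) (hs : p.1 < q.1 ∨ q.2 < p.2) :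
    iv q ⊂ iv p ∧ ¬ iv p ⊂ iv q ∧ ¬ Overlaps p q ∧ ¬ Overlaps q p := by
  rw [ssubset_iff hq hp, ssubset_iff hp hq, overlaps_iff hp hq, overlaps_iff hq hp]
  refine ⟨⟨⟨h1, h2⟩, ?_⟩, ?_, ?_, ?_⟩
  · rintro ⟨u, v⟩; rcases hs with hs | hs <;> linarith
  · rintro ⟨⟨u, v⟩, -⟩; rcases hs with hs | hs <;> linarith
  · rintro ⟨-, -, hno⟩; exact hno ⟨h1, h2⟩
  · rintro ⟨-, hno, -⟩; exact hno ⟨h1, h2⟩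

lemma lr_rel : Overlaps lv rv ∧ Overlaps rv lv ∧ ¬ iv rv ⊂ iv lv ∧ ¬ iv lv ⊂ iv rv := by
  have hl : lv.1 ≤ lv.2 := by norm_num [lv]
  have hr : rv.1 ≤ rv.2 := by norm_num [rv]
  rw [overlaps_iff hl hr, overlaps_iff hr hl, ssubset_iff hr hl, ssubset_iff hl hr]
  simp only [lv, rv]
  norm_num

lemma mapL_bounds {a : ℝ × ℝ} (h1 : 0 ≤ a.1) (h2 : a.1 ≤ a.2) (h3 : a.2 ≤ 1) :
    0 ≤ (mapL a).1 ∧ (mapL a).1 ≤ (mapL a).2 ∧ (mapL a).2 ≤ 3/10 := by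
  simp only [mapL]; refine ⟨by linarith, by linarith, by linarith⟩

lemma mapR_bounds {a : ℝ × ℝ} (h1 : 0 ≤ a.1) (h2 : a.1 ≤ a.2) (h3 : a.2 ≤ 1) :
    7/10 ≤ (mapR a).1 ∧ (mapR a).1 ≤ (mapR a).2 ∧ (mapR a).2 ≤ 1 := by
  simp only [mapR]; refine ⟨by linarith, by linarith, by linarith⟩

lemma mapL_ssubset_iff {a b : ℝ × ℝ} (ha : a.1 ≤ a.2) (hb : b.1 ≤ b.2) :
    iv (mapL b) ⊂ iv (mapL a) ↔ iv b ⊂ iv a := by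
  have ha' : (mapL a).1 ≤ (mapL a).2 := by simp only [mapL]; linarith
  have hb' : (mapL b).1 ≤ (mapL b).2 := by simp only [mapL]; linarith
  rw [ssubset_iff hb' ha', ssubset_iff hb ha]
  simp only [mapL]
  constructor <;> rintro ⟨⟨h1, h2⟩, h3⟩ <;>
    exact ⟨⟨by linarith, by linarith⟩, fun h => h3 ⟨by linarith [h.1], by linarith [h.2]⟩⟩

lemma mapL_overlaps_iff {a b : ℝ × ℝ} (ha : a.1 ≤ a.2) (hb : b.1 ≤ b.2) :
    Overlaps (mapL a) (mapL b) ↔ Overlaps a b := by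
  have ha' : (mapL a).1 ≤ (mapL a).2 := by simp only [mapL]; linarith
  have hb' : (mapL b).1 ≤ (mapL b).2 := by simp only [mapL]; linarith
  rw [overlaps_iff ha' hb', overlaps_iff ha hb]
  simp only [mapL]
  constructor <;> rintro ⟨⟨h1, h2⟩, h3, h4⟩ <;>
    exact ⟨⟨by linarith, by linarith⟩,
      fun h => h3 ⟨by linarith [h.1], by linarith [h.2]⟩,
      fun h => h4 ⟨by linarith [h.1], by linarith [h.2]⟩⟩

lemma mapR_ssubset_iff {a b : ℝ × ℝ} (ha : a.1 ≤ a.2) (hb : b.1 ≤ b.2) :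
    iv (mapR b) ⊂ iv (mapR a) ↔ iv b ⊂ iv a := by
  have ha' : (mapR a).1 ≤ (mapR a).2 := by simp only [mapR]; linarith
  have hb' : (mapR b).1 ≤ (mapR b).2 := by simp only [mapR]; linarith
  rw [ssubset_iff hb' ha', ssubset_iff hb ha]
  simp only [mapR]
  constructor <;> rintro ⟨⟨h1, h2⟩, h3⟩ <;>
    exact ⟨⟨by linarith, by linarith⟩, fun h => h3 ⟨by linarith [h.1], by linarith [h.2]⟩⟩

lemma mapR_overlaps_iff {a b : ℝ × ℝ} (ha : a.1 ≤ a.2) (hb : b.1 ≤ b.2) :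
    Overlaps (mapR a) (mapR b) ↔ Overlaps a b := by
  have ha' : (mapR a).1 ≤ (mapR a).2 := by simp only [mapR]; linarith
  have hb' : (mapR b).1 ≤ (mapR b).2 := by simp only [mapR]; linarith
  rw [overlaps_iff ha' hb', overlaps_iff ha hb]
  simp only [mapR]
  constructor <;> rintro ⟨⟨h1, h2⟩, h3, h4⟩ <;>
    exact ⟨⟨by linarith, by linarith⟩,
      fun h => h3 ⟨by linarith [h.1], by linarith [h.2]⟩,
      fun h => h4 ⟨by linarith [h.1], by linarith [h.2]⟩⟩

end S5

namespace S5

lemma lvb : lv.1 ≤ lv.2 := by norm_num [lv]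
lemma rvb : rv.1 ≤ rv.2 := by norm_num [rv]

lemma inL {b : ℝ × ℝ} (h1 : 0 ≤ b.1) (h2 : b.1 ≤ b.2) (h3 : b.2 ≤ 1) :
    iv (mapL b) ⊂ iv lv ∧ ¬ iv lv ⊂ iv (mapL b) ∧ ¬ Overlaps lv (mapL b) ∧ ¬ Overlaps (mapL b) lv := by
  obtain ⟨c1, c2, c3⟩ := mapL_bounds h1 h2 h3
  refine strict_in lvb c2 ?_ ?_ (Or.inr ?_)
  · show (0:ℝ) ≤ (mapL b).1; exact c1
  · show (mapL b).2 ≤ (3:ℝ)/5; linarith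
  · show (mapL b).2 < (3:ℝ)/5; linarith

lemma inR {b : ℝ × ℝ} (h1 : 0 ≤ b.1) (h2 : b.1 ≤ b.2) (h3 : b.2 ≤ 1) :
    iv (mapR b) ⊂ iv rv ∧ ¬ iv rv ⊂ iv (mapR b) ∧ ¬ Overlaps rv (mapR b) ∧ ¬ Overlaps (mapR b) rv := by
  obtain ⟨c1, c2, c3⟩ := mapR_bounds h1 h2 h3
  refine strict_in rvb c2 ?_ ?_ (Or.inl ?_)
  · show (2:ℝ)/5 ≤ (mapR b).1; linarith
  · show (mapR b).2 ≤ (1:ℝ); exact c3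
  · show (2:ℝ)/5 < (mapR b).1; linarith

lemma disjLR {b : ℝ × ℝ} (h1 : 0 ≤ b.1) (h2 : b.1 ≤ b.2) (h3 : b.2 ≤ 1) :
    ¬ iv (mapR b) ⊂ iv lv ∧ ¬ iv lv ⊂ iv (mapR b) ∧ ¬ Overlaps lv (mapR b) ∧ ¬ Overlaps (mapR b) lv := by
  obtain ⟨c1, c2, c3⟩ := mapR_bounds h1 h2 h3
  exact no_rel lvb c2 (by show (3:ℝ)/5 < (mapR b).1; linarith)

lemma disjRL {b : ℝ × ℝ} (h1 : 0 ≤ b.1) (h2 : b.1 ≤ b.2) (h3 : b.2 ≤ 1) :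
    ¬ iv rv ⊂ iv (mapL b) ∧ ¬ iv (mapL b) ⊂ iv rv ∧ ¬ Overlaps (mapL b) rv ∧ ¬ Overlaps rv (mapL b) := by
  obtain ⟨c1, c2, c3⟩ := mapL_bounds h1 h2 h3
  exact no_rel c2 rvb (by show (mapL b).2 < (2:ℝ)/5; linarith)

lemma disjLLRR {a b : ℝ × ℝ} (ha1 : 0 ≤ a.1) (ha2 : a.1 ≤ a.2) (ha3 : a.2 ≤ 1)
    (hb1 : 0 ≤ b.1) (hb2 : b.1 ≤ b.2) (hb3 : b.2 ≤ 1) :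
    ¬ iv (mapR b) ⊂ iv (mapL a) ∧ ¬ iv (mapL a) ⊂ iv (mapR b) ∧
      ¬ Overlaps (mapL a) (mapR b) ∧ ¬ Overlaps (mapR b) (mapL a) := by
  obtain ⟨c1, c2, c3⟩ := mapL_bounds ha1 ha2 ha3
  obtain ⟨d1, d2, d3⟩ := mapR_bounds hb1 hb2 hb3
  exact no_rel c2 d2 (by linarith)

lemma col_proper : ∀ k, ProperColoring (A k) (col k) := by
  intro k
  induction k with
  | zero =>
    intro p hp q hq
    simp only [A, Finset.mem_singleton] at hp hq
    subst hp; subst hq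
    exact ⟨fun h => (ssubset_irrefl _ h).elim, fun h => (h.2.1 (subset_refl _)).elim⟩
  | succ k ih =>
    intro p hp q hq
    have hAb := A_bounds k
    have self_rel : ∀ r : ℝ × ℝ, (iv r ⊂ iv r → col (k+1) r < col (k+1) r) ∧
        (Overlaps r r → col (k+1) r ≠ col (k+1) r) :=
      fun r => ⟨fun h => (ssubset_irrefl _ h).elim, fun h => (h.2.1 (subset_refl _)).elim⟩
    rcases mem_A_succ.1 hp with rfl | rfl | ⟨a, ha, rfl⟩ | ⟨a, ha, rfl⟩ <;>
      rcases mem_A_succ.1 hq with rfl | rfl | ⟨b, hb', rfl⟩ | ⟨b, hb', rfl⟩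
    · exact self_rel lv
    · exact ⟨fun h => absurd h lr_rel.2.2.1, fun _ => by rw [col_lv, col_rv]; omega⟩
    · obtain ⟨b1, b2, b3⟩ := hAb b hb'
      refine ⟨fun _ => ?_, fun h => absurd h (inL b1 b2 b3).2.2.1⟩
      rw [col_lv, col_mapL b1 b2 b3]
      have := (col_bounds k b hb').1; omega
    · obtain ⟨b1, b2, b3⟩ := hAb b hb'
      exact ⟨fun h => absurd h (disjLR b1 b2 b3).1, fun h => absurd h (disjLR b1 b2 b3).2.2.1⟩
    · exact ⟨fun h => absurd h lr_rel.2.2.2, fun _ => by rw [col_rv, col_lv]; omega⟩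
    · exact self_rel rv
    · obtain ⟨b1, b2, b3⟩ := hAb b hb'
      exact ⟨fun h => absurd h (disjRL b1 b2 b3).2.1, fun h => absurd h (disjRL b1 b2 b3).2.2.2⟩
    · obtain ⟨b1, b2, b3⟩ := hAb b hb'
      refine ⟨fun _ => ?_, fun h => absurd h (inR b1 b2 b3).2.2.1⟩
      rw [col_rv, col_mapR b1 b2 b3]
      have := (col_bounds k b hb').1; omega
    · obtain ⟨a1, a2, a3⟩ := hAb a ha
      exact ⟨fun h => absurd h (inL a1 a2 a3).2.1, fun h => absurd h (inL a1 a2 a3).2.2.2⟩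
    · obtain ⟨a1, a2, a3⟩ := hAb a ha
      exact ⟨fun h => absurd h (disjRL a1 a2 a3).1, fun h => absurd h (disjRL a1 a2 a3).2.2.1⟩
    · obtain ⟨a1, a2, a3⟩ := hAb a ha
      obtain ⟨b1, b2, b3⟩ := hAb b hb'
      constructor
      · intro h
        rw [col_mapL a1 a2 a3, col_mapL b1 b2 b3]
        have := (ih a ha b hb').1 ((mapL_ssubset_iff a2 b2).1 h); omega
      · intro h
        rw [col_mapL a1 a2 a3, col_mapL b1 b2 b3]
        have := (ih a ha b hb').2 ((mapL_overlaps_iff a2 b2).1 h); omega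
    · obtain ⟨a1, a2, a3⟩ := hAb a ha
      obtain ⟨b1, b2, b3⟩ := hAb b hb'
      exact ⟨fun h => absurd h (disjLLRR a1 a2 a3 b1 b2 b3).1,
        fun h => absurd h (disjLLRR a1 a2 a3 b1 b2 b3).2.2.1⟩
    · obtain ⟨a1, a2, a3⟩ := hAb a ha
      exact ⟨fun h => absurd h (disjLR a1 a2 a3).2.1, fun h => absurd h (disjLR a1 a2 a3).2.2.2⟩
    · obtain ⟨a1, a2, a3⟩ := hAb a ha
      exact ⟨fun h => absurd h (inR a1 a2 a3).2.1, fun h => absurd h (inR a1 a2 a3).2.2.2⟩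
    · obtain ⟨a1, a2, a3⟩ := hAb a ha
      obtain ⟨b1, b2, b3⟩ := hAb b hb'
      exact ⟨fun h => absurd h (disjLLRR b1 b2 b3 a1 a2 a3).2.1,
        fun h => absurd h (disjLLRR b1 b2 b3 a1 a2 a3).2.2.2⟩
    · obtain ⟨a1, a2, a3⟩ := hAb a ha
      obtain ⟨b1, b2, b3⟩ := hAb b hb'
      constructor
      · intro h
        rw [col_mapR a1 a2 a3, col_mapR b1 b2 b3]
        have := (ih a ha b hb').1 ((mapR_ssubset_iff a2 b2).1 h); omega
      · intro h
        rw [col_mapR a1 a2 a3, col_mapR b1 b2 b3]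
        have := (ih a ha b hb').2 ((mapR_overlaps_iff a2 b2).1 h); omega

lemma lower : ∀ k, ∀ f, ProperColoring (A k) f → ∀ c, (∀ p ∈ A k, c ≤ f p) →
    ∃ p ∈ A k, c + 2 * k ≤ f p := by
  intro k
  induction k with
  | zero =>
    intro f _ c hc
    exact ⟨((0:ℝ), (1:ℝ)), by simp [A], by simpa using hc _ (by simp [A])⟩
  | succ k ih =>
    intro f hf c hc
    have hlv : lv ∈ A (k+1) := mem_A_succ.2 (Or.inl rfl)
    have hrv : rv ∈ A (k+1) := mem_A_succ.2 (Or.inr (Or.inl rfl))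
    have hne := (hf lv hlv rv hrv).2 lr_rel.1
    have hAb := A_bounds k
    rcases lt_or_gt_of_ne hne with hlt | hlt
    · -- f lv < f rv : descend into the right copy
      have hmem : ∀ a ∈ A k, mapR a ∈ A (k+1) :=
        fun a ha => mem_A_succ.2 (Or.inr (Or.inr (Or.inr ⟨a, ha, rfl⟩)))
      have hg : ProperColoring (A k) (fun a => f (mapR a)) := by
        intro a ha b hb'
        exact ⟨fun h => (hf (mapR a) (hmem a ha) (mapR b) (hmem b hb')).1
            ((mapR_ssubset_iff (hAb a ha).2.1 (hAb b hb').2.1).2 h),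
          fun h => (hf (mapR a) (hmem a ha) (mapR b) (hmem b hb')).2
            ((mapR_overlaps_iff (hAb a ha).2.1 (hAb b hb').2.1).2 h)⟩
      have hc2 : ∀ a ∈ A k, c + 2 ≤ f (mapR a) := by
        intro a ha
        obtain ⟨b1, b2, b3⟩ := hAb a ha
        have hsub := (hf rv hrv (mapR a) (hmem a ha)).1 (inR b1 b2 b3).1
        have := hc lv hlv
        omega
      obtain ⟨a, ha, hfa⟩ := ih (fun a => f (mapR a)) hg (c+2) hc2
      exact ⟨mapR a, hmem a ha, by omega⟩
    · -- f rv < f lv : descend into the left copy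
      have hmem : ∀ a ∈ A k, mapL a ∈ A (k+1) :=
        fun a ha => mem_A_succ.2 (Or.inr (Or.inr (Or.inl ⟨a, ha, rfl⟩)))
      have hg : ProperColoring (A k) (fun a => f (mapL a)) := by
        intro a ha b hb'
        exact ⟨fun h => (hf (mapL a) (hmem a ha) (mapL b) (hmem b hb')).1
            ((mapL_ssubset_iff (hAb a ha).2.1 (hAb b hb').2.1).2 h),
          fun h => (hf (mapL a) (hmem a ha) (mapL b) (hmem b hb')).2
            ((mapL_overlaps_iff (hAb a ha).2.1 (hAb b hb').2.1).2 h)⟩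
      have hc2 : ∀ a ∈ A k, c + 2 ≤ f (mapL a) := by
        intro a ha
        obtain ⟨b1, b2, b3⟩ := hAb a ha
        have hsub := (hf lv hlv (mapL a) (hmem a ha)).1 (inL b1 b2 b3).1
        have := hc rv hrv
        omega
      obtain ⟨a, ha, hfa⟩ := ih (fun a => f (mapL a)) hg (c+2) hc2
      exact ⟨mapL a, hmem a ha, by omega⟩

lemma chromNum_A (k : ℕ) : ChromNum (A k) = 2 * k + 1 := by
  have hmem : 2 * k + 1 ∈ {m | ∃ f : ℝ × ℝ → ℕ, ProperColoring (A k) f ∧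
      ∀ p ∈ A k, f p ∈ Finset.Icc 1 m} :=
    ⟨col k, col_proper k, fun p hp =>
      Finset.mem_Icc.2 ⟨(col_bounds k p hp).1, (col_bounds k p hp).2⟩⟩
  have hlb : ∀ m ∈ {m | ∃ f : ℝ × ℝ → ℕ, ProperColoring (A k) f ∧
      ∀ p ∈ A k, f p ∈ Finset.Icc 1 m}, 2 * k + 1 ≤ m := by
    rintro m ⟨f, hf, hbd⟩
    obtain ⟨p, hp, hge⟩ := lower k f hf 1 (fun p hp => (Finset.mem_Icc.1 (hbd p hp)).1)
    have := (Finset.mem_Icc.1 (hbd p hp)).2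
    omega
  unfold ChromNum
  exact le_antisymm (Nat.sInf_le hmem) (le_csInf ⟨_, hmem⟩ hlb)

end S5


/-- For every `n ≥ 1` there is a set `I_n` of `3·2^(n−1) − 2` intervals whose containment
interval graph has clique number `n` and chromatic number exactly `2n − 1`. -/
theorem stmt5 (n : ℕ) (hn : 1 ≤ n) :
    ∃ I : Finset (ℝ × ℝ), (∀ p ∈ I, p.1 ≤ p.2) ∧
      I.card = 3 * 2 ^ (n - 1) - 2 ∧
      CliqueNum I = n ∧
      ChromNum I = 2 * n - 1 := by
  obtain ⟨k, rfl⟩ : ∃ k, n = k + 1 := ⟨n - 1, by omega⟩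
  refine ⟨S5.A k, fun p hp => (S5.A_bounds k p hp).2.1, ?_, ?_, ?_⟩
  · rw [Nat.add_sub_cancel]; exact S5.A_card k
  · rw [S5.cliqueNum_A]
  · rw [S5.chromNum_A]; omega
end

section
/- For the recursively defined interval family I_n (two overlapping long intervals each containing a copy of I_{n−1} in their exclusive parts), any proper coloring of the containment interval graph C[I_n] uses colors whose maximum minus minimum is at least 2n − 2. -/
/-- `IsFam n I` means that `I` is a valid copy of the recursively defined family
`I_{n+1}`:  `I_1` is a single interval; `I_{n+1}` consists of two overlapping
intervals `l` and `r` together with a copy of `I_n` contained in `l \ r` and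
another copy contained in `r \ l`. -/
def IsFam : ℕ → Finset (ℝ × ℝ) → Prop
  | 0, I => ∃ p : ℝ × ℝ, p.1 < p.2 ∧ I = {p}
  | n + 1, I => ∃ (l r : ℝ × ℝ) (A B : Finset (ℝ × ℝ)),
      l.1 < r.1 ∧ r.1 < l.2 ∧ l.2 < r.2 ∧
      IsFam n A ∧ IsFam n B ∧
      (∀ p ∈ A, l.1 < p.1 ∧ p.1 ≤ p.2 ∧ p.2 < r.1) ∧
      (∀ p ∈ B, l.2 < p.1 ∧ p.1 ≤ p.2 ∧ p.2 < r.2) ∧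
      I = insert l (insert r (A ∪ B))

lemma proper_mono {I S : Finset (ℝ × ℝ)} {f : ℝ × ℝ → ℕ} (h : ProperColoring I f)
    (hS : S ⊆ I) : ProperColoring S f :=
  fun p hp q hq => h p (hS hp) q (hS hq)

lemma fam_key (m : ℕ) (I : Finset (ℝ × ℝ)) (hI : IsFam m I) (f : ℝ × ℝ → ℕ)
    (hf : ProperColoring I f) : ∃ p ∈ I, ∃ q ∈ I, f q + 2 * m ≤ f p := by
  induction m generalizing I with
  | zero =>
    obtain ⟨p, hp, rfl⟩ := hI
    exact ⟨p, by simp, p, by simp, by omega⟩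
  | succ m ih =>
    obtain ⟨l, r, A, B, h1, h2, h3, hA, hB, hAin, hBin, rfl⟩ := hI
    have hlI : l ∈ insert l (insert r (A ∪ B)) := Finset.mem_insert_self _ _
    have hrI : r ∈ insert l (insert r (A ∪ B)) :=
      Finset.mem_insert_of_mem (Finset.mem_insert_self _ _)
    have hAsub : A ⊆ insert l (insert r (A ∪ B)) := by
      intro x hx
      exact Finset.mem_insert_of_mem (Finset.mem_insert_of_mem
        (Finset.mem_union_left _ hx))
    have hBsub : B ⊆ insert l (insert r (A ∪ B)) := by
      intro x hx
      exact Finset.mem_insert_of_mem (Finset.mem_insert_of_mem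
        (Finset.mem_union_right _ hx))
    obtain ⟨p, hp, q, hq, hpq⟩ := ih A hA (proper_mono hf hAsub)
    obtain ⟨p', hp', q', hq', hpq'⟩ := ih B hB (proper_mono hf hBsub)
    -- l and r overlap
    have hlr : f l ≠ f r := by
      refine (hf l hlI r hrI).2 ⟨⟨r.1, ?_, ?_⟩, ?_, ?_⟩
      · exact ⟨le_of_lt h1, le_of_lt h2⟩
      · exact ⟨le_refl _, by linarith⟩
      · intro hsub
        have := hsub (⟨le_refl _, by linarith⟩ : l.1 ∈ iv l)
        exact absurd this.1 (by linarith)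
      · intro hsub
        have := hsub (⟨by linarith, le_refl _⟩ : r.2 ∈ iv r)
        exact absurd this.2 (by linarith)
    -- q ∈ A is properly inside l
    have hlq : f l < f q := by
      obtain ⟨ha1, ha2, ha3⟩ := hAin q hq
      refine (hf l hlI q (hAsub hq)).1 ⟨Set.Icc_subset_Icc (le_of_lt ha1) (by linarith), ?_⟩
      intro hsub
      have := hsub (⟨le_refl _, by linarith⟩ : l.1 ∈ iv l)
      exact absurd this.1 (by linarith)
    -- q' ∈ B is properly inside r
    have hrq : f r < f q' := by
      obtain ⟨hb1, hb2, hb3⟩ := hBin q' hq'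
      refine (hf r hrI q' (hBsub hq')).1 ⟨Set.Icc_subset_Icc (by linarith) (le_of_lt hb3), ?_⟩
      intro hsub
      have := hsub (⟨le_refl _, by linarith⟩ : r.1 ∈ iv r)
      exact absurd this.1 (by linarith)
    rcases lt_or_gt_of_ne hlr with h | h
    · exact ⟨p', hBsub hp', l, hlI, by omega⟩
    · exact ⟨p, hAsub hp, r, hrI, by omega⟩

/-- For the recursively defined family `I_n`, any proper coloring of `C[I_n]` uses
colors whose maximum minus minimum is at least `2n − 2`. -/
theorem stmt6 (n : ℕ) (hn : 1 ≤ n) (I : Finset (ℝ × ℝ)) (hI : IsFam (n - 1) I)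
    (f : ℝ × ℝ → ℕ) (hf : ProperColoring I f) :
    ∃ p ∈ I, ∃ q ∈ I, f q + (2 * n - 2) ≤ f p := by
  obtain ⟨p, hp, q, hq, h⟩ := fam_key (n - 1) I hI f hf
  exact ⟨p, hp, q, hq, by omega⟩
end

section
/- For any mixed graph G without directed cycles whose underlying undirected graph is perfect in the sense that χ(U(G)) = ω(G) (in particular, any mixed interval graph), G admits a proper coloring with at most (λ(G)+1)·ω(G) colors, where λ(G) is the length of a longest directed path and ω(G) is the clique number of the underlying undirected graph. -/
/-- A mixed graph: a vertex set with undirected edges and directed arcs. -/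
structure MixedGraph (V : Type*) where
  edge : V → V → Prop
  arc : V → V → Prop
  edge_symm : ∀ u v, edge u v → edge v u
  edge_irrefl : ∀ v, ¬ edge v v

variable {V : Type*}

/-- A proper coloring of a mixed graph: endpoints of edges get distinct colors,
and colors strictly increase along arcs. -/
def MProperColoring (G : MixedGraph V) (f : V → ℕ) : Prop :=
  (∀ u v, G.edge u v → f u ≠ f v) ∧ (∀ u v, G.arc u v → f u < f v)

/-- A mixed graph has no directed cycle among its arcs. -/
def ArcAcyclic (G : MixedGraph V) : Prop :=
  ∀ v, ¬ Relation.TransGen G.arc v v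

/-- `p : Fin (t+1) → V` is a directed path of length `t` (following arcs). -/
def IsDiPath (G : MixedGraph V) (t : ℕ) (p : Fin (t + 1) → V) : Prop :=
  ∀ i : Fin t, G.arc (p i.castSucc) (p i.succ)

/-- `lam G` is the length of a longest directed path in `G`. -/
noncomputable def lam (G : MixedGraph V) : ℕ :=
  sSup {t | ∃ p : Fin (t + 1) → V, IsDiPath G t p}

/-- Adjacency in the underlying undirected graph `U(G)`. -/
def UAdj (G : MixedGraph V) (u v : V) : Prop :=
  u ≠ v ∧ (G.edge u v ∨ G.arc u v ∨ G.arc v u)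

/-- The clique number of the underlying undirected graph of `G`. -/
noncomputable def MCliqueNum (G : MixedGraph V) : ℕ :=
  sSup {n | ∃ S : Finset V, (∀ u ∈ S, ∀ v ∈ S, u ≠ v → UAdj G u v) ∧ S.card = n}

/-- The chromatic number of a mixed graph: the least `k` admitting a proper
coloring with colors in `{1, …, k}`. -/
noncomputable def MChromNum (G : MixedGraph V) : ℕ :=
  sInf {k | ∃ f : V → ℕ, MProperColoring G f ∧ ∀ v, f v ∈ Finset.Icc 1 k}

lemma dipath_trans (G : MixedGraph V) {t : ℕ} {p : Fin (t+1) → V}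
    (hp : IsDiPath G t p) : ∀ b a : ℕ, (ha : a < b) → (hb : b < t+1) →
    Relation.TransGen G.arc (p ⟨a, lt_trans ha hb⟩) (p ⟨b, hb⟩) := by
  intro b
  induction b with
  | zero => omega
  | succ k ih =>
    intro a ha hb
    have hk : k < t := by omega
    have step : G.arc (p ⟨k, by omega⟩) (p ⟨k+1, hb⟩) := by
      have := hp ⟨k, hk⟩
      simpa [Fin.castSucc, Fin.succ, Fin.castAdd, Fin.castLE] using this
    rcases Nat.lt_or_ge a k with h | h
    · exact (ih a h (by omega)).tail step
    · have : a = k := by omega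
      subst this
      exact Relation.TransGen.single step

lemma dipath_inj [Fintype V] (G : MixedGraph V) (hacyc : ArcAcyclic G)
    {t : ℕ} {p : Fin (t+1) → V} (hp : IsDiPath G t p) : Function.Injective p := by
  intro a b hab
  by_contra hne
  rcases Ne.lt_or_gt (fun h : a = b => hne h) with h | h
  · have h2 := dipath_trans G hp b.1 a.1 h b.2
    rw [Fin.eta, Fin.eta, hab] at h2
    exact hacyc (p b) h2
  · have h2 := dipath_trans G hp a.1 b.1 h a.2
    rw [Fin.eta, Fin.eta, ← hab] at h2
    exact hacyc (p a) h2

lemma dipath_len_le [Fintype V] (G : MixedGraph V) (hacyc : ArcAcyclic G)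
    {t : ℕ} {p : Fin (t+1) → V} (hp : IsDiPath G t p) : t ≤ Fintype.card V := by
  have := Fintype.card_le_of_injective p (dipath_inj G hacyc hp)
  rw [Fintype.card_fin] at this
  omega

lemma dipath_snoc (G : MixedGraph V) {L : ℕ} {p : Fin (L+1) → V} {u v : V}
    (hp : IsDiPath G L p) (hlast : p (Fin.last L) = u) (h : G.arc u v) :
    ∃ q : Fin (L+2) → V, IsDiPath G (L+1) q ∧ q (Fin.last (L+1)) = v := by
  refine ⟨Fin.snoc p v, ?_, by simp⟩
  intro i
  rcases Nat.lt_or_ge i.1 L with hi | hi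
  · have h1 : (i.castSucc : Fin (L+2)) = ((⟨i.1, hi⟩ : Fin L).castSucc.castSucc : Fin (L+2)) := by
      ext; simp
    have h2 : (i.succ : Fin (L+2)) = ((⟨i.1, hi⟩ : Fin L).succ.castSucc : Fin (L+2)) := by
      ext; simp
    rw [h1, h2, Fin.snoc_castSucc, Fin.snoc_castSucc]
    exact hp ⟨i.1, hi⟩
  · have hiL : i.1 = L := by omega
    have h1 : (i.castSucc : Fin (L+2)) = ((Fin.last L).castSucc : Fin (L+2)) := by
      ext; simp [hiL]
    have h2 : (i.succ : Fin (L+2)) = (Fin.last (L+1)) := by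
      ext; simp [hiL]
    rw [h1, h2, Fin.snoc_castSucc, Fin.snoc_last, hlast]
    exact h

noncomputable def layer (G : MixedGraph V) (v : V) : ℕ :=
  sSup {t | ∃ p : Fin (t+1) → V, IsDiPath G t p ∧ p (Fin.last t) = v}

lemma layer_set_nonempty (G : MixedGraph V) (v : V) :
    {t | ∃ p : Fin (t+1) → V, IsDiPath G t p ∧ p (Fin.last t) = v}.Nonempty :=
  ⟨0, fun _ => v, fun i => i.elim0, rfl⟩

lemma layer_set_bdd [Fintype V] (G : MixedGraph V) (hacyc : ArcAcyclic G) (v : V) :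
    BddAbove {t | ∃ p : Fin (t+1) → V, IsDiPath G t p ∧ p (Fin.last t) = v} :=
  ⟨Fintype.card V, fun _ ⟨_, hp, _⟩ => dipath_len_le G hacyc hp⟩

lemma lam_set_bdd [Fintype V] (G : MixedGraph V) (hacyc : ArcAcyclic G) :
    BddAbove {t | ∃ p : Fin (t+1) → V, IsDiPath G t p} :=
  ⟨Fintype.card V, fun _ ⟨_, hp⟩ => dipath_len_le G hacyc hp⟩

lemma layer_le_lam [Fintype V] (G : MixedGraph V) (hacyc : ArcAcyclic G) (v : V) :
    layer G v ≤ lam G :=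
  csSup_le_csSup (lam_set_bdd G hacyc) (layer_set_nonempty G v)
    (fun _ ⟨p, hp, _⟩ => ⟨p, hp⟩)

lemma layer_mem [Fintype V] (G : MixedGraph V) (hacyc : ArcAcyclic G) (v : V) :
    layer G v ∈ {t | ∃ p : Fin (t+1) → V, IsDiPath G t p ∧ p (Fin.last t) = v} :=
  Nat.sSup_mem (layer_set_nonempty G v) (layer_set_bdd G hacyc v)

lemma layer_arc [Fintype V] (G : MixedGraph V) (hacyc : ArcAcyclic G)
    {u v : V} (h : G.arc u v) : layer G u + 1 ≤ layer G v := by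
  obtain ⟨p, hp, hlast⟩ := layer_mem G hacyc u
  obtain ⟨q, hq, hqlast⟩ := dipath_snoc G hp hlast h
  exact le_csSup (layer_set_bdd G hacyc v) ⟨q, hq, hqlast⟩

lemma mclique_pos [Fintype V] [Nonempty V] (G : MixedGraph V) : 1 ≤ MCliqueNum G := by
  obtain ⟨v0⟩ := ‹Nonempty V›
  have hbdd : BddAbove {n | ∃ S : Finset V,
      (∀ u ∈ S, ∀ v ∈ S, u ≠ v → UAdj G u v) ∧ S.card = n} :=
    ⟨Fintype.card V, fun n ⟨S, _, hS⟩ => hS ▸ S.card_le_univ⟩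
  exact le_csSup hbdd ⟨{v0}, by simp, by simp⟩


/-- Any finite mixed graph `G` without directed cycles whose underlying undirected
graph can be properly colored with `ω(G)` colors (e.g. any mixed interval graph)
admits a proper coloring with at most `(λ(G)+1)·ω(G)` colors. -/
theorem stmt9 {V : Type*} [Fintype V] (G : MixedGraph V)
    (hacyc : ArcAcyclic G)
    (hperf : ∃ c : V → ℕ, (∀ u v, UAdj G u v → c u ≠ c v) ∧
      ∀ v, c v ∈ Finset.Icc 1 (MCliqueNum G)) :
    ∃ f : V → ℕ, MProperColoring G f ∧
      ∀ v, f v ∈ Finset.Icc 1 ((lam G + 1) * MCliqueNum G) := by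
  by_cases hV : Nonempty V
  · obtain ⟨c, hc, hcr⟩ := hperf
    have hω1 : 1 ≤ MCliqueNum G := mclique_pos G
    have hc1 : ∀ v, 1 ≤ c v := fun v => (Finset.mem_Icc.mp (hcr v)).1
    have hc2 : ∀ v, c v ≤ MCliqueNum G := fun v => (Finset.mem_Icc.mp (hcr v)).2
    set ω := MCliqueNum G with hω
    refine ⟨fun v => layer G v * ω + c v, ⟨?_, ?_⟩, ?_⟩
    · -- edges
      intro u v he
      have key : ∀ x y : V, layer G x < layer G y →
          layer G x * ω + c x < layer G y * ω + c y := by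
        intro x y hxy
        calc layer G x * ω + c x ≤ layer G x * ω + ω := by
              exact Nat.add_le_add_left (hc2 x) _
          _ = (layer G x + 1) * ω := by ring
          _ ≤ layer G y * ω := Nat.mul_le_mul_right ω hxy
          _ < layer G y * ω + c y := by have := hc1 y; omega
      rcases lt_trichotomy (layer G u) (layer G v) with h | h | h
      · exact Nat.ne_of_lt (key u v h)
      · have hne : u ≠ v := fun heq => G.edge_irrefl v (heq ▸ he)
        have hcc := hc u v ⟨hne, Or.inl he⟩
        intro heq
        simp only [h] at heq
        exact hcc (Nat.add_left_cancel heq)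
      · exact (Nat.ne_of_lt (key v u h)).symm
    · -- arcs
      intro u v ha
      have hxy : layer G u < layer G v := layer_arc G hacyc ha
      calc layer G u * ω + c u ≤ layer G u * ω + ω := Nat.add_le_add_left (hc2 u) _
        _ = (layer G u + 1) * ω := by ring
        _ ≤ layer G v * ω := Nat.mul_le_mul_right ω hxy
        _ < layer G v * ω + c v := by have := hc1 v; omega
    · intro v
      rw [Finset.mem_Icc]
      constructor
      · exact le_trans (hc1 v) (Nat.le_add_left _ _)
      · have h1 : layer G v ≤ lam G := layer_le_lam G hacyc v
        have h2 : c v ≤ ω := hc2 v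
        calc layer G v * ω + c v ≤ lam G * ω + ω := by
              exact Nat.add_le_add (Nat.mul_le_mul_right ω h1) h2
          _ = (lam G + 1) * ω := by ring
  · exact ⟨fun _ => 1, ⟨fun u _ _ => (hV ⟨u⟩).elim, fun u _ _ => (hV ⟨u⟩).elim⟩,
      fun v => (hV ⟨v⟩).elim⟩
end

section
/- Given a proper coloring c of the underlying undirected graph U(G) of a mixed graph G with k colors, and a layering ℓ : V → {0,…,λ} such that ℓ(x) < ℓ(y) for every arc (x,y), the function f(x) = ℓ(x)·k + c(x) is a proper coloring of the mixed graph G. -/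
variable {V : Type*}

/-- Combining a proper `k`-coloring `c` of the underlying undirected graph with a
layering `ℓ` that strictly increases along arcs via `f x = ℓ x · k + c x` yields a
proper coloring of the mixed graph `G`. -/
theorem stmt11 {V : Type*} (G : MixedGraph V) (k lamG : ℕ)
    (c : V → ℕ) (hc : ∀ u v, UAdj G u v → c u ≠ c v)
    (hck : ∀ v, c v ∈ Finset.Icc 1 k)
    (ell : V → ℕ) (hell : ∀ x, ell x ≤ lamG)
    (harc : ∀ x y, G.arc x y → ell x < ell y) :
    MProperColoring G (fun x => ell x * k + c x) := by
  constructor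
  · intro u v huv
    have hne : u ≠ v := fun h => G.edge_irrefl v (h ▸ huv)
    have hcne : c u ≠ c v := hc u v ⟨hne, Or.inl huv⟩
    simp only [ne_eq]
    intro h
    rcases eq_or_ne (ell u) (ell v) with he | he
    · rw [he] at h
      exact hcne (by omega)
    · have h1 := (Finset.mem_Icc.mp (hck u))
      have h2 := (Finset.mem_Icc.mp (hck v))
      rcases lt_or_gt_of_ne he with hlt | hlt
      · have : ell u * k + k ≤ ell v * k := by
          have h3 : (ell u + 1) * k ≤ ell v * k := Nat.mul_le_mul_right k hlt
          rw [add_mul, one_mul] at h3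
          omega
        omega
      · have : ell v * k + k ≤ ell u * k := by
          have h3 : (ell v + 1) * k ≤ ell u * k := Nat.mul_le_mul_right k hlt
          rw [add_mul, one_mul] at h3
          omega
        omega
  · intro u v huv
    have h1 := (Finset.mem_Icc.mp (hck u))
    have h2 := (Finset.mem_Icc.mp (hck v))
    have hlt := harc u v huv
    have h3 : (ell u + 1) * k ≤ ell v * k := Nat.mul_le_mul_right k hlt
    rw [add_mul, one_mul] at h3
    simp only
    omega
end

section
/- For every k ≥ 1 there exists a mixed interval graph G_k with 2k² vertices satisfying λ(G_k) = k − 1, ω(G_k) = 2k, and chromatic number χ(G_k) = k(k+1) = (λ(G_k)+2)·ω(G_k)/2. -/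
variable {V : Type*}

namespace S12

variable {k : ℕ}

/-- side of a vertex: `0` (right-marching) or `1` (left-marching). -/
def sd (v : Fin (2 * k ^ 2)) : ℕ := v.val / k ^ 2
/-- group of a vertex, in `[0, k)`. -/
def gp (v : Fin (2 * k ^ 2)) : ℕ := v.val % k ^ 2 / k
/-- copy index of a vertex, in `[0, k)`. -/
def cp (v : Fin (2 * k ^ 2)) : ℕ := v.val % k

lemma sd_le (hk : 1 ≤ k) (v : Fin (2 * k ^ 2)) : sd v ≤ 1 := by
  have h : v.val / k ^ 2 < 2 := (Nat.div_lt_iff_lt_mul (by positivity)).2 (by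
    have := v.isLt; linarith)
  unfold sd; omega

lemma gp_lt (hk : 1 ≤ k) (v : Fin (2 * k ^ 2)) : gp v < k := by
  have h1 : v.val % k ^ 2 < k ^ 2 := Nat.mod_lt _ (by positivity)
  unfold gp
  rw [Nat.div_lt_iff_lt_mul hk]
  calc v.val % k ^ 2 < k ^ 2 := h1
    _ = k * k := pow_two k

lemma cp_lt (hk : 1 ≤ k) (v : Fin (2 * k ^ 2)) : cp v < k := Nat.mod_lt _ hk

lemma val_eq (v : Fin (2 * k ^ 2)) :
    v.val = sd v * k ^ 2 + gp v * k + cp v := by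
  have h1 := Nat.div_add_mod v.val (k ^ 2)
  have h2 := Nat.div_add_mod (v.val % k ^ 2) k
  have h3 : v.val % k ^ 2 % k = v.val % k := Nat.mod_mod_of_dvd _ ⟨k, pow_two k⟩
  unfold sd gp cp
  linarith

lemma ext_scg {u v : Fin (2 * k ^ 2)} (hs : sd u = sd v)
    (hg : gp u = gp v) (hc : cp u = cp v) : u = v := by
  apply Fin.ext
  rw [val_eq u, val_eq v, hs, hg, hc]

/-- encode a (side, group, copy) triple as a vertex. -/
def enc (hk : 1 ≤ k) (s g c : ℕ) (hs : s ≤ 1) (hg : g < k) (hc : c < k) :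
    Fin (2 * k ^ 2) :=
  ⟨s * k ^ 2 + g * k + c, by nlinarith [sq_nonneg k]⟩

lemma sd_enc (hk : 1 ≤ k) {s g c : ℕ} (hs : s ≤ 1) (hg : g < k) (hc : c < k) :
    sd (enc hk s g c hs hg hc) = s := by
  have hgc : g * k + c < k ^ 2 := by nlinarith
  show (s * k ^ 2 + g * k + c) / k ^ 2 = s
  rw [show s * k ^ 2 + g * k + c = (g * k + c) + k ^ 2 * s by ring,
    Nat.add_mul_div_left _ _ (by positivity : (0:ℕ) < k ^ 2),
    Nat.div_eq_of_lt hgc, zero_add]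

lemma gp_enc (hk : 1 ≤ k) {s g c : ℕ} (hs : s ≤ 1) (hg : g < k) (hc : c < k) :
    gp (enc hk s g c hs hg hc) = g := by
  have hgc : g * k + c < k ^ 2 := by nlinarith
  show (s * k ^ 2 + g * k + c) % k ^ 2 / k = g
  rw [show s * k ^ 2 + g * k + c = (g * k + c) + k ^ 2 * s by ring,
    Nat.add_mul_mod_self_left, Nat.mod_eq_of_lt hgc,
    show g * k + c = c + k * g by ring,
    Nat.add_mul_div_left _ _ (by omega : 0 < k), Nat.div_eq_of_lt hc, zero_add]

lemma cp_enc (hk : 1 ≤ k) {s g c : ℕ} (hs : s ≤ 1) (hg : g < k) (hc : c < k) :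
    cp (enc hk s g c hs hg hc) = c := by
  show (s * k ^ 2 + g * k + c) % k = c
  rw [show s * k ^ 2 + g * k + c = c + k * (s * k + g) by ring,
    Nat.add_mul_mod_self_left, Nat.mod_eq_of_lt hc]

/-- The mixed interval graph `G_k`. -/
def Gk (k : ℕ) : MixedGraph (Fin (2 * k ^ 2)) where
  edge u v := (sd u = sd v ∧ gp u = gp v ∧ cp u ≠ cp v) ∨
    (gp u = k - 1 ∧ gp v = k - 1 ∧ sd u ≠ sd v)
  arc u v := sd u = sd v ∧ gp v = gp u + 1
  edge_symm := by
    rintro u v (⟨h1, h2, h3⟩ | ⟨h1, h2, h3⟩)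
    · exact Or.inl ⟨h1.symm, h2.symm, fun h => h3 h.symm⟩
    · exact Or.inr ⟨h2, h1, fun h => h3 h.symm⟩
  edge_irrefl := by
    rintro v (⟨_, _, h3⟩ | ⟨_, _, h3⟩) <;> exact h3 rfl

/-- Left endpoint (as a natural number). -/
def lep (k : ℕ) (v : Fin (2 * k ^ 2)) : ℕ :=
  if sd v = 0 then 3 * gp v + 3 else 6 * k - 3 * gp v

/-- Right endpoint (as a natural number). -/
def rep (k : ℕ) (v : Fin (2 * k ^ 2)) : ℕ :=
  if sd v = 0 then 3 * gp v + 7 else 6 * k + 4 - 3 * gp v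

/-- The interval assigned to a vertex. -/
noncomputable def Ivl (k : ℕ) (v : Fin (2 * k ^ 2)) : ℝ × ℝ :=
  ((lep k v : ℝ), (rep k v : ℝ))

lemma lep_le_rep (hk : 1 ≤ k) (v : Fin (2 * k ^ 2)) : lep k v ≤ rep k v := by
  have := gp_lt hk v
  unfold lep rep
  split <;> omega

lemma inter_iff (hk : 1 ≤ k) (u v : Fin (2 * k ^ 2)) :
    (iv (Ivl k u) ∩ iv (Ivl k v)).Nonempty ↔
      max (lep k u) (lep k v) ≤ min (rep k u) (rep k v) := by
  unfold iv Ivl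
  rw [Set.Icc_inter_Icc, Set.nonempty_Icc]
  simp only
  rw [← Nat.cast_max, ← Nat.cast_min, Nat.cast_le]

lemma adj_iff (hk : 1 ≤ k) (u v : Fin (2 * k ^ 2)) (huv : u ≠ v) :
    UAdj (Gk k) u v ↔ (iv (Ivl k u) ∩ iv (Ivl k v)).Nonempty := by
  rw [inter_iff hk]
  have hgu := gp_lt hk u
  have hgv := gp_lt hk v
  have hcap : sd u = sd v → gp u = gp v → cp u ≠ cp v := by
    intro h1 h2 h3; exact huv (ext_scg h1 h2 h3)
  have hP : UAdj (Gk k) u v ↔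
      ((sd u = sd v ∧ (gp u = gp v ∨ gp v = gp u + 1 ∨ gp u = gp v + 1)) ∨
        (gp u = k - 1 ∧ gp v = k - 1 ∧ sd u ≠ sd v)) := by
    constructor
    · rintro ⟨-, (⟨h1, h2, -⟩ | h) | ⟨h1, h2⟩ | ⟨h1, h2⟩⟩
      · exact Or.inl ⟨h1, Or.inl h2⟩
      · exact Or.inr h
      · exact Or.inl ⟨h1, Or.inr (Or.inl h2)⟩
      · exact Or.inl ⟨h1.symm, Or.inr (Or.inr h2)⟩
    · rintro (⟨h1, (h2 | h2 | h2)⟩ | h)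
      · exact ⟨huv, Or.inl (Or.inl ⟨h1, h2, hcap h1 h2⟩)⟩
      · exact ⟨huv, Or.inr (Or.inl ⟨h1, h2⟩)⟩
      · exact ⟨huv, Or.inr (Or.inr ⟨h1.symm, h2⟩)⟩
      · exact ⟨huv, Or.inl (Or.inr h)⟩
  rw [hP]
  unfold lep rep
  have hsu := sd_le hk u
  have hsv := sd_le hk v
  have hu : sd u = 0 ∨ sd u = 1 := by omega
  have hv : sd v = 0 ∨ sd v = 1 := by omega
  rcases hu with hu | hu <;> rcases hv with hv | hv <;>
    simp only [hu, hv] <;> norm_num <;> omega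

lemma gp_dipath (hk : 1 ≤ k) {t : ℕ} {p : Fin (t + 1) → Fin (2 * k ^ 2)}
    (hp : IsDiPath (Gk k) t p) :
    ∀ i : Fin (t + 1), gp (p i) = gp (p 0) + i.val := by
  intro i
  induction i using Fin.induction with
  | zero => simp
  | succ j ihj =>
    obtain ⟨-, h2⟩ := hp j
    rw [h2, ihj]
    simp [Fin.val_succ, Fin.coe_castSucc]
    omega

lemma lam_Gk (hk : 1 ≤ k) : lam (Gk k) = k - 1 := by
  have hmem : (k - 1) ∈
      {t | ∃ p : Fin (t + 1) → Fin (2 * k ^ 2), IsDiPath (Gk k) t p} := by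
    refine ⟨fun i => enc hk 0 i.val 0 (by omega) (by omega) hk, ?_⟩
    intro i
    refine ⟨?_, ?_⟩
    · rw [sd_enc hk, sd_enc hk]
    · rw [gp_enc hk, gp_enc hk]
      simp [Fin.val_succ, Fin.coe_castSucc]
  have hub : ∀ t ∈ {t | ∃ p : Fin (t + 1) → Fin (2 * k ^ 2), IsDiPath (Gk k) t p},
      t ≤ k - 1 := by
    rintro t ⟨p, hp⟩
    have h1 := gp_dipath hk hp ⟨t, by omega⟩
    have h2 := gp_lt hk (p ⟨t, by omega⟩)
    simp only at h1
    omega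
  exact le_antisymm (csSup_le ⟨k - 1, hmem⟩ hub) (le_csSup ⟨k - 1, hub⟩ hmem)

/-- the `k` identical copies with side `s` and group `g`. -/
def fib (k s g : ℕ) : Finset (Fin (2 * k ^ 2)) :=
  Finset.univ.filter (fun v => sd v = s ∧ gp v = g)

lemma mem_fib {s g : ℕ} {v : Fin (2 * k ^ 2)} :
    v ∈ fib k s g ↔ sd v = s ∧ gp v = g := by
  simp [fib]

lemma card_fib (hk : 1 ≤ k) {s g : ℕ} (hs : s ≤ 1) (hg : g < k) :
    (fib k s g).card = k := by
  have heq : fib k s g =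
      Finset.image (fun c : Fin k => enc hk s g c.val hs hg c.isLt) Finset.univ := by
    ext v
    simp only [mem_fib, Finset.mem_image, Finset.mem_univ, true_and]
    constructor
    · rintro ⟨h1, h2⟩
      exact ⟨⟨cp v, cp_lt hk v⟩, ext_scg (by rw [sd_enc hk]; exact h1.symm)
        (by rw [gp_enc hk]; exact h2.symm) (by rw [cp_enc hk])⟩
    · rintro ⟨c, rfl⟩
      exact ⟨sd_enc hk _ _ _, gp_enc hk _ _ _⟩
  have hinj : Function.Injective (fun c : Fin k => enc hk s g c.val hs hg c.isLt) := by
    intro a b hab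
    have h := congrArg cp hab
    rw [cp_enc hk, cp_enc hk] at h
    exact Fin.ext h
  rw [heq, Finset.card_image_of_injective _ hinj, Finset.card_univ, Fintype.card_fin]

lemma uadj_rel {u v : Fin (2 * k ^ 2)} (h : UAdj (Gk k) u v) :
    (sd u = sd v ∧ gp u = gp v) ∨
    (sd u = sd v ∧ (gp v = gp u + 1 ∨ gp u = gp v + 1)) ∨
    (gp u = k - 1 ∧ gp v = k - 1 ∧ sd u ≠ sd v) := by
  obtain ⟨-, (⟨h1, h2, -⟩ | h) | ⟨h1, h2⟩ | ⟨h1, h2⟩⟩ := h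
  · exact Or.inl ⟨h1, h2⟩
  · exact Or.inr (Or.inr h)
  · exact Or.inr (Or.inl ⟨h1, Or.inl h2⟩)
  · exact Or.inr (Or.inl ⟨h1.symm, Or.inr h2⟩)

lemma clique_ub (hk : 1 ≤ k) (S : Finset (Fin (2 * k ^ 2)))
    (hS : ∀ u ∈ S, ∀ v ∈ S, u ≠ v → UAdj (Gk k) u v) : S.card ≤ 2 * k := by
  classical
  set P := S.image (fun v => (sd v, gp v)) with hPdef
  have hP2 : P.card ≤ 2 := by
    by_contra hlt
    rw [not_le] at hlt
    obtain ⟨a, b, c, ha, hb, hc, hab, hac, hbc⟩ := Finset.two_lt_card_iff.1 hlt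
    obtain ⟨u, hu, hua⟩ := Finset.mem_image.1 ha
    obtain ⟨v, hv, hva⟩ := Finset.mem_image.1 hb
    obtain ⟨w, hw, hwa⟩ := Finset.mem_image.1 hc
    subst hua hva hwa
    have r1 := uadj_rel (hS u hu v hv (by rintro rfl; exact hab rfl))
    have r2 := uadj_rel (hS u hu w hw (by rintro rfl; exact hac rfl))
    have r3 := uadj_rel (hS v hv w hw (by rintro rfl; exact hbc rfl))
    simp only [ne_eq, Prod.mk.injEq, not_and] at hab hac hbc
    have b1 := sd_le hk u; have b2 := sd_le hk v; have b3 := sd_le hk w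
    have c1 := gp_lt hk u; have c2 := gp_lt hk v; have c3 := gp_lt hk w
    omega
  have hsub : S ⊆ P.biUnion (fun p => fib k p.1 p.2) := by
    intro v hv
    exact Finset.mem_biUnion.2 ⟨(sd v, gp v), Finset.mem_image_of_mem _ hv,
      mem_fib.2 ⟨rfl, rfl⟩⟩
  calc S.card ≤ (P.biUnion (fun p => fib k p.1 p.2)).card := Finset.card_le_card hsub
    _ ≤ ∑ p ∈ P, (fib k p.1 p.2).card := Finset.card_biUnion_le
    _ ≤ ∑ _p ∈ P, k := Finset.sum_le_sum (fun p hp => by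
        obtain ⟨v, _, rfl⟩ := Finset.mem_image.1 hp
        exact le_of_eq (card_fib hk (sd_le hk v) (gp_lt hk v)))
    _ = P.card * k := by rw [Finset.sum_const, smul_eq_mul]
    _ ≤ 2 * k := Nat.mul_le_mul_right k hP2

lemma clique_mem (hk : 1 ≤ k) :
    2 * k ∈ {n | ∃ S : Finset (Fin (2 * k ^ 2)),
      (∀ u ∈ S, ∀ v ∈ S, u ≠ v → UAdj (Gk k) u v) ∧ S.card = n} := by
  classical
  refine ⟨fib k 0 (k - 1) ∪ fib k 1 (k - 1), ?_, ?_⟩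
  · intro u hu v hv huv
    rw [Finset.mem_union, mem_fib, mem_fib] at hu hv
    have hgu : gp u = k - 1 := by rcases hu with ⟨_, h⟩ | ⟨_, h⟩ <;> exact h
    have hgv : gp v = k - 1 := by rcases hv with ⟨_, h⟩ | ⟨_, h⟩ <;> exact h
    refine ⟨huv, Or.inl ?_⟩
    by_cases hss : sd u = sd v
    · exact Or.inl ⟨hss, hgu.trans hgv.symm,
        fun hc => huv (ext_scg hss (hgu.trans hgv.symm) hc)⟩
    · exact Or.inr ⟨hgu, hgv, hss⟩
  · have hdis : Disjoint (fib k 0 (k - 1)) (fib k 1 (k - 1)) := by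
      rw [Finset.disjoint_left]
      intro a ha hb
      rw [mem_fib] at ha hb
      omega
    rw [Finset.card_union_of_disjoint hdis, card_fib hk (by omega) (by omega),
      card_fib hk (by omega) (by omega)]
    ring

lemma cliquenum_Gk (hk : 1 ≤ k) : MCliqueNum (Gk k) = 2 * k := by
  have hub : ∀ n ∈ {n | ∃ S : Finset (Fin (2 * k ^ 2)),
      (∀ u ∈ S, ∀ v ∈ S, u ≠ v → UAdj (Gk k) u v) ∧ S.card = n}, n ≤ 2 * k := by
    rintro n ⟨S, hS, rfl⟩
    exact clique_ub hk S hS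
  exact le_antisymm (csSup_le ⟨2 * k, clique_mem hk⟩ hub)
    (le_csSup ⟨2 * k, hub⟩ (clique_mem hk))

lemma key_eq (hk : 1 ≤ k) : (k - 1) * k + k = k ^ 2 := by
  have h9 : k - 1 + 1 = k := by omega
  calc (k - 1) * k + k = ((k - 1) + 1) * k := by ring
    _ = k ^ 2 := by rw [h9, pow_two]

/-- The optimal coloring of `G_k`. -/
def col (k : ℕ) (v : Fin (2 * k ^ 2)) : ℕ :=
  if sd v = 1 ∧ gp v = k - 1 then k ^ 2 + cp v + 1 else gp v * k + cp v + 1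

lemma col_proper (hk : 1 ≤ k) : MProperColoring (Gk k) (col k) := by
  constructor
  · rintro u v (⟨h1, h2, h3⟩ | ⟨h1, h2, h3⟩)
    · by_cases hc : sd v = 1 ∧ gp v = k - 1
      · simp only [col, h1, h2, if_pos hc]
        omega
      · simp only [col, h1, h2, if_neg hc]
        omega
    · have hsu := sd_le hk u; have hsv := sd_le hk v
      have hcu := cp_lt hk u; have hcv := cp_lt hk v
      have hkk := key_eq hk
      unfold col
      rcases (by omega : sd u = 0 ∧ sd v = 1 ∨ sd u = 1 ∧ sd v = 0) with
        ⟨ha, hb⟩ | ⟨ha, hb⟩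
      · rw [if_neg (by omega : ¬ (sd u = 1 ∧ gp u = k - 1)), if_pos ⟨hb, h2⟩, h1]
        omega
      · rw [if_pos ⟨ha, h1⟩, if_neg (by omega : ¬ (sd v = 1 ∧ gp v = k - 1)), h2]
        omega
  · rintro u v ⟨h1, h2⟩
    have hgv := gp_lt hk v
    have hcu := cp_lt hk u; have hcv := cp_lt hk v
    have hkk := key_eq hk
    have hgu_ne : ¬ (sd u = 1 ∧ gp u = k - 1) := by omega
    unfold col
    rw [if_neg hgu_ne]
    by_cases hc : sd v = 1 ∧ gp v = k - 1
    · rw [if_pos hc]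
      have h4 : gp u * k + k ≤ (k - 1) * k := by
        have h5 : gp u + 1 ≤ k - 1 := by omega
        calc gp u * k + k = (gp u + 1) * k := by ring
          _ ≤ (k - 1) * k := Nat.mul_le_mul_right k h5
      omega
    · rw [if_neg hc]
      have h4 : gp v * k = gp u * k + k := by rw [h2]; ring
      omega

lemma col_mem (hk : 1 ≤ k) (v : Fin (2 * k ^ 2)) :
    col k v ∈ Finset.Icc 1 (k * (k + 1)) := by
  have hg := gp_lt hk v; have hc := cp_lt hk v
  have hkk := key_eq hk
  have hb : gp v * k ≤ (k - 1) * k := Nat.mul_le_mul_right k (by omega)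
  have hm : k * (k + 1) = k ^ 2 + k := by ring
  rw [Finset.mem_Icc]
  unfold col
  split <;> omega

lemma pigeon {T : Finset ℕ} {n m : ℕ} (hcard : T.card = n) (hm : ∀ x ∈ T, m ≤ x)
    (hn : 0 < n) : ∃ x ∈ T, m + n ≤ x + 1 := by
  by_contra hcon
  push_neg at hcon
  have hsub : T ⊆ Finset.Ico m (m + n - 1) := by
    intro x hx
    rw [Finset.mem_Ico]
    exact ⟨hm x hx, by have := hcon x hx; omega⟩
  have hle := Finset.card_le_card hsub
  rw [Nat.card_Ico] at hle
  omega

lemma image_card (hk : 1 ≤ k) {f : Fin (2 * k ^ 2) → ℕ}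
    (hf : MProperColoring (Gk k) f) {s g : ℕ} (hs : s ≤ 1) (hg : g < k) :
    ((fib k s g).image f).card = k := by
  have hinj : Set.InjOn f (fib k s g) := by
    intro u hu v hv hfe
    rw [Finset.mem_coe, mem_fib] at hu hv
    by_contra hne
    exact hf.1 u v (Or.inl ⟨hu.1.trans hv.1.symm, hu.2.trans hv.2.symm,
      fun hcp => hne (ext_scg (hu.1.trans hv.1.symm) (hu.2.trans hv.2.symm) hcp)⟩) hfe
  rw [Finset.card_image_of_injOn hinj, card_fib hk hs hg]

lemma chain (hk : 1 ≤ k) {f : Fin (2 * k ^ 2) → ℕ}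
    (hf : MProperColoring (Gk k) f) (h1 : ∀ v, 1 ≤ f v) :
    ∀ g, g < k → ∀ v : Fin (2 * k ^ 2), gp v = g → g * k + 1 ≤ f v := by
  intro g
  induction g with
  | zero => intro _ v _; simpa using h1 v
  | succ n ih =>
    intro hn v hgv
    have hcard := image_card hk hf (sd_le hk v) (show n < k by omega)
    have hware : ∀ x ∈ (fib k (sd v) n).image f, n * k + 1 ≤ x := by
      intro x hx
      obtain ⟨u, hu, rfl⟩ := Finset.mem_image.1 hx
      exact ih (by omega) u (mem_fib.1 hu).2
    obtain ⟨x, hx, hxge⟩ := pigeon hcard hware (by omega)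
    obtain ⟨u, hu, rfl⟩ := Finset.mem_image.1 hx
    rw [mem_fib] at hu
    have harc : (Gk k).arc u v := ⟨hu.1, by omega⟩
    have hlt := hf.2 u v harc
    have hnk : (n + 1) * k = n * k + k := by ring
    omega

lemma union_edge (hk : 1 ≤ k) {u v : Fin (2 * k ^ 2)}
    (hu : u ∈ fib k 0 (k - 1) ∪ fib k 1 (k - 1))
    (hv : v ∈ fib k 0 (k - 1) ∪ fib k 1 (k - 1)) (huv : u ≠ v) :
    (Gk k).edge u v := by
  rw [Finset.mem_union, mem_fib, mem_fib] at hu hv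
  have hgu : gp u = k - 1 := by rcases hu with ⟨_, h⟩ | ⟨_, h⟩ <;> exact h
  have hgv : gp v = k - 1 := by rcases hv with ⟨_, h⟩ | ⟨_, h⟩ <;> exact h
  by_cases hss : sd u = sd v
  · exact Or.inl ⟨hss, hgu.trans hgv.symm,
      fun hc => huv (ext_scg hss (hgu.trans hgv.symm) hc)⟩
  · exact Or.inr ⟨hgu, hgv, hss⟩

lemma chrom_lb (hk : 1 ≤ k) {f : Fin (2 * k ^ 2) → ℕ} {K : ℕ}
    (hf : MProperColoring (Gk k) f) (hI : ∀ v, f v ∈ Finset.Icc 1 K) :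
    k * (k + 1) ≤ K := by
  classical
  have h1 : ∀ v, 1 ≤ f v := fun v => (Finset.mem_Icc.1 (hI v)).1
  set T := (fib k 0 (k - 1) ∪ fib k 1 (k - 1)).image f with hT
  have hinj : Set.InjOn f ((fib k 0 (k - 1) ∪ fib k 1 (k - 1)) : Finset _) := by
    intro u hu v hv hfe
    rw [Finset.mem_coe] at hu hv
    by_contra hne
    exact hf.1 u v (union_edge hk hu hv hne) hfe
  have hdis : Disjoint (fib k 0 (k - 1)) (fib k 1 (k - 1)) := by
    rw [Finset.disjoint_left]
    intro a ha hb
    rw [mem_fib] at ha hb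
    omega
  have hcard : T.card = 2 * k := by
    rw [hT, Finset.card_image_of_injOn hinj, Finset.card_union_of_disjoint hdis,
      card_fib hk (by omega) (by omega), card_fib hk (by omega) (by omega)]
    ring
  have hge : ∀ x ∈ T, (k - 1) * k + 1 ≤ x := by
    intro x hx
    obtain ⟨u, hu, rfl⟩ := Finset.mem_image.1 hx
    rw [Finset.mem_union, mem_fib, mem_fib] at hu
    have hgu : gp u = k - 1 := by rcases hu with ⟨_, h⟩ | ⟨_, h⟩ <;> exact h
    exact chain hk hf h1 (k - 1) (by omega) u hgu
  obtain ⟨x, hx, hxge⟩ := pigeon hcard hge (by omega)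
  obtain ⟨u, _, rfl⟩ := Finset.mem_image.1 hx
  have hK := (Finset.mem_Icc.1 (hI u)).2
  have hkk := key_eq hk
  have hm : k * (k + 1) = k ^ 2 + k := by ring
  omega

lemma chromnum_Gk (hk : 1 ≤ k) : MChromNum (Gk k) = k * (k + 1) := by
  have hmem : k * (k + 1) ∈ {K | ∃ f : Fin (2 * k ^ 2) → ℕ,
      MProperColoring (Gk k) f ∧ ∀ v, f v ∈ Finset.Icc 1 K} :=
    ⟨col k, col_proper hk, col_mem hk⟩
  refine le_antisymm (Nat.sInf_le hmem) (le_csInf ⟨_, hmem⟩ ?_)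
  rintro K ⟨f, hf, hI⟩
  exact chrom_lb hk hf hI

end S12

/-- For every `k ≥ 1` there is a mixed interval graph `G_k` on `2k²` vertices with
`λ(G_k) = k − 1`, `ω(G_k) = 2k`, and `χ(G_k) = k(k+1) = (λ(G_k)+2)·ω(G_k)/2`. -/
theorem stmt12 (k : ℕ) (hk : 1 ≤ k) :
    ∃ (G : MixedGraph (Fin (2 * k ^ 2))) (I : Fin (2 * k ^ 2) → ℝ × ℝ),
      (∀ v, (I v).1 ≤ (I v).2) ∧
      (∀ u v, u ≠ v → (UAdj G u v ↔ (iv (I u) ∩ iv (I v)).Nonempty)) ∧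
      lam G = k - 1 ∧
      MCliqueNum G = 2 * k ∧
      MChromNum G = k * (k + 1) := by
  refine ⟨S12.Gk k, S12.Ivl k, ?_, ?_, ?_, ?_, ?_⟩
  · intro v
    exact (Nat.cast_le (α := ℝ)).2 (S12.lep_le_rep hk v)
  · exact fun u v huv => S12.adj_iff hk u v huv
  · exact S12.lam_Gk hk
  · exact S12.cliquenum_Gk hk
  · exact S12.chromnum_Gk hk
end

section
/- In a mixed graph consisting of k groups of k vertices each, where the vertices inside each group are pairwise joined by undirected edges (so each group is a clique) and every vertex in group i has an arc to every vertex in group i+1, any proper coloring satisfies: the minimum color in group i is at least i, and all k colors in group i are distinct, so at least 2k − 1 colors are needed overall. -/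
/-- Consider `k` groups `G_1, …, G_k` of `k` vertices each (vertex `(i,j)` is the
`j`-th vertex of group `i+1`), with undirected edges inside each group and an arc
from every vertex of group `i` to every vertex of group `i+1`.  Any proper coloring
`f` (with colors at least `1`) gives distinct colors within each group, colors at
least `i+1` in group `i` (0-indexed), and some vertex gets a color at least `2k − 1`. -/
theorem stmt13 (k : ℕ) (hk : 1 ≤ k) (f : Fin k × Fin k → ℕ)
    (hpos : ∀ v, 1 ≤ f v)
    (hedge : ∀ (i : Fin k) (j j' : Fin k), j ≠ j' → f (i, j) ≠ f (i, j'))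
    (harc : ∀ (i i' : Fin k), (i' : ℕ) = (i : ℕ) + 1 →
      ∀ j j' : Fin k, f (i, j) < f (i', j')) :
    (∀ (i : Fin k) (j j' : Fin k), j ≠ j' → f (i, j) ≠ f (i, j')) ∧
    (∀ (i j : Fin k), (i : ℕ) + 1 ≤ f (i, j)) ∧
    (∃ i j : Fin k, 2 * k - 1 ≤ f (i, j)) := by
  have hlow : ∀ (i j : Fin k), (i : ℕ) + 1 ≤ f (i, j) := by
    have key : ∀ n (h : n < k) (j : Fin k), n + 1 ≤ f (⟨n, h⟩, j) := by
      intro n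
      induction n with
      | zero => intro h j; exact hpos _
      | succ n ih =>
        intro h j
        have hn : n < k := by omega
        have h1 := harc ⟨n, hn⟩ ⟨n + 1, h⟩ rfl j j
        have h2 := ih hn j
        omega
    intro i j
    exact key i.val i.isLt j
  refine ⟨hedge, hlow, ?_⟩
  -- consider the last group
  set i : Fin k := ⟨k - 1, by omega⟩ with hi
  by_contra hcon
  push_neg at hcon
  have hall : ∀ j : Fin k, f (i, j) ∈ Finset.Ico k (2 * k - 1) := by
    intro j
    have h1 := hlow i j
    have h2 := hcon i j
    have hiv : (i : ℕ) = k - 1 := rfl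
    rw [hiv] at h1
    exact Finset.mem_Ico.mpr ⟨by omega, by omega⟩
  have hinj : Function.Injective (fun j : Fin k => f (i, j)) := by
    intro a b hab
    by_contra hne
    exact hedge i a b hne hab
  have hcard := Finset.card_le_card_of_injOn (s := Finset.univ)
    (t := Finset.Ico k (2 * k - 1)) (fun j : Fin k => f (i, j))
    (fun j _ => hall j) (fun a _ b _ h => hinj h)
  simp [Nat.card_Ico] at hcard
  omega
end

section
/- Given two linear orders L₁, L₂ on a finite set V whose intersection is a partial order P, assign to each v ∈ V the interval [a_v, b_v] where a_v is the rank of v in L₁ (negated suitably) and b_v is determined by the reverse rank in L₂ such that all left endpoints precede all right endpoints. Then for all u ≠ v: u < v in P iff the interval of u properly contains the interval of v, and u, v incomparable in P iff their intervals overlap without containment. -/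
/-! When all intervals share the point `0`, any two intersect, so they either overlap or one
contains the other. Since `L₁` and `L₂` are injective on endpoints, proper containment of the
interval of `v` in that of `u` means exactly that `u` precedes `v` in `L₁` and in `L₂`, i.e.
`u < v` in `P`; the remaining pairs, the incomparable ones, are the overlapping ones. -/

theorem iv_ssubset_iff {p q : ℝ × ℝ} (hq : q.1 ≤ q.2) (h₁ : p.1 ≠ q.1) (h₂ : p.2 ≠ q.2) :
    iv q ⊂ iv p ↔ p.1 < q.1 ∧ q.2 < p.2 := by
  constructor
  · intro h
    obtain ⟨hle₁, hle₂⟩ := (Set.Icc_subset_Icc_iff hq).1 h.subset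
    exact ⟨hle₁.lt_of_ne h₁, hle₂.lt_of_ne h₂.symm⟩
  · rintro ⟨hlt₁, hlt₂⟩
    exact Set.Icc_ssubset_Icc_left (hlt₁.le.trans (hq.trans hlt₂.le)) hlt₁ hlt₂.le

theorem iv_ne_of_fst_ne {p q : ℝ × ℝ} (hp : p.1 ≤ p.2) (hq : q.1 ≤ q.2) (h : p.1 ≠ q.1) :
    iv p ≠ iv q :=
  fun he => h <|
    le_antisymm ((Set.Icc_subset_Icc_iff hq).1 he.ge).1 ((Set.Icc_subset_Icc_iff hp).1 he.le).1

theorem overlaps_iff_not_ssubset {p q : ℝ × ℝ} (hpq : (iv p ∩ iv q).Nonempty)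
    (hne : iv p ≠ iv q) : Overlaps p q ↔ ¬ iv p ⊂ iv q ∧ ¬ iv q ⊂ iv p := by
  simp only [Overlaps, hpq, true_and, ssubset_iff_subset_ne, ne_eq, hne, Ne.symm hne,
    not_false_eq_true, and_true]

theorem stmt15_general {V : Type*} (s₁ s₂ : LinearOrder V)
    (r : V → V → Prop)
    (hr : ∀ u v, r u v ↔ (s₁.lt u v ∧ s₂.lt u v))
    (I : V → ℝ × ℝ)
    (hleft : ∀ v, (I v).1 ∈ Set.Ioo (-1 : ℝ) 0)
    (hright : ∀ v, (I v).2 ∈ Set.Ioo (0 : ℝ) 1)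
    (hL1 : ∀ u v, s₁.lt u v ↔ (I u).1 < (I v).1)
    (hL2 : ∀ u v, s₂.lt u v ↔ (I v).2 < (I u).2) :
    ∀ u v, u ≠ v →
      (r u v ↔ iv (I v) ⊂ iv (I u)) ∧
      ((¬ r u v ∧ ¬ r v u) ↔ Overlaps (I u) (I v)) := by
  have hzero : ∀ w, (0 : ℝ) ∈ iv (I w) := fun w => ⟨(hleft w).2.le, (hright w).1.le⟩
  have hle : ∀ w, (I w).1 ≤ (I w).2 := fun w => (hzero w).1.trans (hzero w).2
  have hfst : ∀ {u v}, u ≠ v → (I u).1 ≠ (I v).1 :=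
    (@StrictMono.injective V ℝ s₁ _ _ fun a b => (hL1 a b).1).ne
  have hsnd : ∀ {u v}, u ≠ v → (I u).2 ≠ (I v).2 :=
    (@StrictAnti.injective V ℝ s₂ _ _ fun a b => (hL2 a b).1).ne
  have hcontain : ∀ {u v}, u ≠ v → (r u v ↔ iv (I v) ⊂ iv (I u)) := fun huv => by
    rw [hr, hL1, hL2, iv_ssubset_iff (hle _) (hfst huv) (hsnd huv)]
  intro u v huv
  refine ⟨hcontain huv, ?_⟩
  rw [hcontain huv, hcontain huv.symm, and_comm,
    overlaps_iff_not_ssubset ⟨0, hzero u, hzero v⟩ (iv_ne_of_fst_ne (hle u) (hle v) (hfst huv))]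

/-- Given two linear orders `L₁, L₂` on a finite set whose intersection is the
partial order `P = r`, place all left endpoints in `(−1, 0)` ordered by `L₁` and all
right endpoints in `(0, 1)` ordered by the reverse of `L₂`.  Then for distinct `u, v`:
`u < v` in `P` iff the interval of `u` properly contains that of `v`, and `u, v` are
incomparable in `P` iff their intervals overlap without containment. -/
theorem stmt15 {V : Type*} [Fintype V] (s₁ s₂ : LinearOrder V)
    (r : V → V → Prop)
    (hr : ∀ u v, r u v ↔ (s₁.lt u v ∧ s₂.lt u v))
    (I : V → ℝ × ℝ)
    (hleft : ∀ v, (I v).1 ∈ Set.Ioo (-1 : ℝ) 0)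
    (hright : ∀ v, (I v).2 ∈ Set.Ioo (0 : ℝ) 1)
    (hL1 : ∀ u v, s₁.lt u v ↔ (I u).1 < (I v).1)
    (hL2 : ∀ u v, s₂.lt u v ↔ (I v).2 < (I u).2) :
    ∀ u v, u ≠ v →
      (r u v ↔ iv (I v) ⊂ iv (I u)) ∧
      ((¬ r u v ∧ ¬ r v u) ↔ Overlaps (I u) (I v)) :=
  stmt15_general s₁ s₂ r hr I hleft hright hL1 hL2
end

section
/- If f₁ is a proper 2-coloring (colors {1,2}) of the overlap graph of a subset R of a finite interval family I such that no interval of I\R is containment-maximal and every interval of I\R intersecting an interval in R only at points also covered by R, and f₂ is a proper coloring of C[I\R] with colors {1,…,k}, then f defined by f = f₁ on R and f = f₂ + 2 on I\R is a proper coloring of C[I] with colors {1,…,k+2}, provided: R consists of containment-maximal intervals, ∪R = ∪I. -/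
open scoped Classical in
/-- Combining a proper 2-coloring `f₁` of the overlap graph of a set `R` of
containment-maximal intervals covering `∪I` with a proper coloring `f₂` of
`C[I \ R]` using colors `{1, …, k}`, shifted by `2`, yields a proper coloring of
`C[I]` with colors `{1, …, k+2}` (here no interval of `I \ R` is containment-maximal). -/
theorem stmt18 (I R : Finset (ℝ × ℝ)) (hiv : ∀ p ∈ I, p.1 ≤ p.2)
    (hRI : R ⊆ I)
    (hmax : ∀ p ∈ R, ∀ q ∈ I, ¬ iv p ⊂ iv q)
    (hcov : unionIv R = unionIv I)
    (hnotmax : ∀ p ∈ I \ R, ∃ q ∈ I, iv p ⊂ iv q)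
    (f₁ : ℝ × ℝ → ℕ)
    (hf₁col : ∀ p ∈ R, f₁ p = 1 ∨ f₁ p = 2)
    (hf₁ : ∀ p ∈ R, ∀ q ∈ R, Overlaps p q → f₁ p ≠ f₁ q)
    (k : ℕ) (f₂ : ℝ × ℝ → ℕ)
    (hf₂ : ProperColoring (I \ R) f₂)
    (hf₂col : ∀ p ∈ I \ R, f₂ p ∈ Finset.Icc 1 k) :
    ProperColoring I (fun p => if p ∈ R then f₁ p else f₂ p + 2) ∧
    ∀ p ∈ I, (if p ∈ R then f₁ p else f₂ p + 2) ∈ Finset.Icc 1 (k + 2) := by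
  constructor
  · intro p hp q hq
    constructor
    · intro hsub
      by_cases hqR : q ∈ R
      · exact absurd hsub (hmax q hqR p hp)
      · simp only [if_neg hqR]
        have hq2 : 1 ≤ f₂ q := (Finset.mem_Icc.1 (hf₂col q (Finset.mem_sdiff.2 ⟨hq, hqR⟩))).1
        by_cases hpR : p ∈ R
        · simp only [if_pos hpR]
          rcases hf₁col p hpR with h | h <;> omega
        · simp only [if_neg hpR]
          have := (hf₂ p (Finset.mem_sdiff.2 ⟨hp, hpR⟩) q (Finset.mem_sdiff.2 ⟨hq, hqR⟩)).1 hsub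
          omega
    · intro hov
      by_cases hpR : p ∈ R <;> by_cases hqR : q ∈ R
      · simp only [if_pos hpR, if_pos hqR]
        exact hf₁ p hpR q hqR hov
      · simp only [if_pos hpR, if_neg hqR]
        rcases hf₁col p hpR with h | h <;>
          have := (Finset.mem_Icc.1 (hf₂col q (Finset.mem_sdiff.2 ⟨hq, hqR⟩))).1 <;> omega
      · simp only [if_neg hpR, if_pos hqR]
        rcases hf₁col q hqR with h | h <;>
          have := (Finset.mem_Icc.1 (hf₂col p (Finset.mem_sdiff.2 ⟨hp, hpR⟩))).1 <;> omega
      · simp only [if_neg hpR, if_neg hqR]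
        have := (hf₂ p (Finset.mem_sdiff.2 ⟨hp, hpR⟩) q (Finset.mem_sdiff.2 ⟨hq, hqR⟩)).2 hov
        omega
  · intro p hp
    by_cases hpR : p ∈ R
    · simp only [if_pos hpR, Finset.mem_Icc]
      rcases hf₁col p hpR with h | h <;> omega
    · simp only [if_neg hpR, Finset.mem_Icc]
      have := Finset.mem_Icc.1 (hf₂col p (Finset.mem_sdiff.2 ⟨hp, hpR⟩))
      omega
end
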